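/- arXiv:1604.04747 — 10 statements merged into one kernel-verified Lean document; each statement's English description precedes it below -/
import Mathlib

section
/- Let $(R,\mathfrak{m})$ be a two-dimensional regular local ring with infinite residue field and let $I$ be an $\mathfrak{m}$-primary ideal. If $\mathfrak{m}I : x = I$ for some $x \in \mathfrak{m}$ (i.e., $I$ is $\mathfrak{m}$-full), then necessarily $x \notin \mathfrak{m}^2$. -/
open Ideal IsLocalRing Submodule

/-- In a two-dimensional regular local ring with infinite residue field, if an
`𝔪`-primary ideal `I` is `𝔪`-full with respect to `x ∈ 𝔪`, then `x ∉ 𝔪²`. -/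
theorem mFull_elem_not_mem_sq {R : Type*} [CommRing R] [IsDomain R] [IsNoetherianRing R]
    [IsLocalRing R] (hdim : ringKrullDim R = 2)
    (hreg : ∃ u v : R, maximalIdeal R = Ideal.span {u, v})
    (hres : Infinite (ResidueField R))
    (I : Ideal R) (hI : I.radical = maximalIdeal R)
    (x : R) (hx : x ∈ maximalIdeal R)
    (hfull : (maximalIdeal R * I).colon (Ideal.span {x}) = I) :
    x ∉ maximalIdeal R ^ 2 := by
  intro hx2
  classical
  have hInetop : I ≠ ⊤ := by
    intro h
    rw [h, Ideal.radical_top] at hI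
    exact (IsLocalRing.maximalIdeal.isMaximal R).ne_top hI.symm
  have hfgrad : I.radical.FG := by rw [hI]; exact IsNoetherian.noetherian _
  obtain ⟨n, hn⟩ := Ideal.exists_radical_pow_le_of_fg I hfgrad
  rw [hI] at hn
  have hex : ∃ n, maximalIdeal R ^ n ≤ I := ⟨n, hn⟩
  have hk : maximalIdeal R ^ Nat.find hex ≤ I := Nat.find_spec hex
  have hk1 : Nat.find hex ≠ 0 := by
    intro h
    rw [h, pow_zero, Ideal.one_eq_top] at hk
    exact hInetop (top_le_iff.mp hk)
  have hlt : ¬ maximalIdeal R ^ (Nat.find hex - 1) ≤ I :=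
    Nat.find_min hex (Nat.sub_lt (Nat.pos_of_ne_zero hk1) one_pos)
  obtain ⟨y, hy, hyI⟩ := SetLike.not_le_iff_exists.mp hlt
  have hym : Ideal.span {y} * maximalIdeal R ≤ I := by
    rw [Ideal.span_singleton_mul_le_iff]
    intro z hz
    have h1 : y * z ∈ maximalIdeal R ^ (Nat.find hex - 1) * maximalIdeal R :=
      Ideal.mul_mem_mul hy hz
    rw [← pow_succ, Nat.sub_add_cancel (Nat.pos_of_ne_zero hk1)] at h1
    exact hk h1
  have hyx : y * x ∈ maximalIdeal R * I := by
    have h1 : y * x ∈ Ideal.span {y} * maximalIdeal R ^ 2 :=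
      Ideal.mul_mem_mul (Ideal.mem_span_singleton_self y) hx2
    have h2 : Ideal.span {y} * maximalIdeal R ^ 2 ≤ maximalIdeal R * I := by
      rw [pow_two, ← mul_assoc]
      calc Ideal.span {y} * maximalIdeal R * maximalIdeal R
          ≤ I * maximalIdeal R := Ideal.mul_mono_left hym
        _ = maximalIdeal R * I := mul_comm _ _
    exact h2 h1
  have : y ∈ I := by
    rw [← hfull, Ideal.mem_colon_span_singleton]
    exact hyx
  exact hyI this
end

section
/- Let $(R,\mathfrak{m})$ be a two-dimensional regular local ring with infinite residue field and $I$ an $\mathfrak{m}$-primary ideal. Then $\mathfrak{m}I : x = I$ for some $x \in \mathfrak{m}$ if and only if $I : x = I : \mathfrak{m}$ for some $x \in \mathfrak{m} \setminus \mathfrak{m}^2$. -/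
/-! If `𝔪I : x = I`, then `x ∉ 𝔪²`: otherwise `I : 𝔪 ⊆ 𝔪I : x = I`, impossible for an
`𝔪`-primary `I ≠ R`. And `(I : x)𝔪 ⊆ 𝔪I : x = I`, so `I : x = I : 𝔪`.

Conversely, complete `x ∉ 𝔪²` to `𝔪 = (x, y)`. Since `dim R = 2`, the ring `R/(y)` has positive
dimension and principal maximal ideal `(x)`, so by Krull's intersection theorem `x` is regular
modulo `y`. If `zx = xi + yj` with `i, j ∈ I`, then `z - i = cy`, hence `cx = j ∈ I`, so
`c ∈ I : x = I : 𝔪` and `z = i + cy ∈ I`. -/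

open Ideal IsLocalRing Submodule

section

variable {R : Type*} [CommRing R]

theorem Ideal.eq_top_of_colon_le_of_pow_le {I J : Ideal R} (hcolon : I.colon J ≤ I) :
    ∀ {n : ℕ}, J ^ n ≤ I → I = ⊤
  | 0, h => by simpa using h
  | n + 1, h => eq_top_of_colon_le_of_pow_le hcolon fun a ha =>
      hcolon <| mem_colon.2 fun b hb => h (pow_succ J n ▸ mul_mem_mul ha hb)

theorem Ideal.colon_le_mul_colon_span_of_mem_sq {m I : Ideal R} {x : R} (hx : x ∈ m ^ 2) :
    I.colon m ≤ (m * I).colon (span {x}) := by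
  intro w hw
  have hsq : m ^ 2 ≤ (m * I).colon {w} := pow_two m ▸ mul_le.2 fun a ha b hb => by
    rw [mem_colon_singleton, smul_eq_mul, mul_assoc]
    exact mul_mem_mul ha (mul_comm w b ▸ mem_colon.1 hw b hb)
  rw [Ideal.mem_colon_span_singleton, mul_comm w x, ← smul_eq_mul]
  exact mem_colon_singleton.1 (hsq hx)

theorem Ideal.colon_span_eq_colon_of_mul_colon_eq {m I : Ideal R} {x : R} (hx : x ∈ m)
    (hfull : (m * I).colon (span {x}) = I) : I.colon (span {x}) = I.colon m := by
  refine le_antisymm (fun z hz => mem_colon.2 fun c hc => ?_) ?_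
  · rw [← hfull, Ideal.mem_colon_span_singleton, smul_eq_mul, mul_right_comm]
    exact mul_comm c _ ▸ mul_mem_mul hc (Ideal.mem_colon_span_singleton.1 hz)
  · exact colon_mono le_rfl (Ideal.span_le.2 (Set.singleton_subset_iff.2 hx))

theorem Ideal.mul_colon_span_singleton_eq_of_colon_eq [IsDomain R] {m I : Ideal R} {x y : R}
    (hm : m = span {x, y}) (hx : IsSMulRegular (R ⧸ span {y}) x)
    (hcolon : I.colon (span {x}) = I.colon m) : (m * I).colon (span {x}) = I := by
  have hxm : x ∈ m := hm ▸ Ideal.subset_span (by simp)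
  have hym : y ∈ m := hm ▸ Ideal.subset_span (by simp)
  refine le_antisymm (fun z hz => ?_) (fun z hz => ?_)
  · rw [Ideal.mem_colon_span_singleton, hm, span_insert, sup_mul, mem_sup] at hz
    obtain ⟨_, hxi, _, hyj, hzx⟩ := hz
    obtain ⟨i, hi, rfl⟩ := mem_span_singleton_mul.1 hxi
    obtain ⟨j, hj, rfl⟩ := mem_span_singleton_mul.1 hyj
    obtain ⟨c, hc⟩ : ∃ c, c * y = z - i := Ideal.mem_span_singleton'.1 <|
      mem_of_isSMulRegular_quotient_of_smul_mem hx <| Ideal.mem_span_singleton'.2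
        ⟨j, by rw [smul_eq_mul]; linear_combination hzx⟩
    have hz : z = i + c * y := by rw [hc]; ring
    rcases eq_or_ne y 0 with rfl | hy
    · simpa [hz] using hi
    have hcx : c * x = j := mul_left_cancel₀ hy (by linear_combination x * hc - hzx)
    have hcI : c ∈ I.colon m := hcolon ▸ Ideal.mem_colon_span_singleton.2 (hcx ▸ hj)
    exact hz ▸ add_mem hi (mem_colon.1 hcI y hym)
  · rw [Ideal.mem_colon_span_singleton, mul_comm z x]
    exact mul_mem_mul hxm hz

theorem Ideal.span_pair_mul_add_mul_right_of_isUnit {a b u v : R} (ha : IsUnit a) :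
    span {a * u + b * v, v} = span {u, v} := by
  rw [span_pair_add_mul_right, span_insert, span_singleton_mul_left_unit ha, ← span_insert]

theorem IsLocalRing.exists_maximalIdeal_eq_span_pair_of_notMem_sq [IsLocalRing R] {u v x : R}
    (hm : maximalIdeal R = span {u, v}) (hx : x ∈ maximalIdeal R)
    (hx2 : x ∉ maximalIdeal R ^ 2) : ∃ y, maximalIdeal R = span {x, y} := by
  obtain ⟨a, b, rfl⟩ := Ideal.mem_span_pair.1 (hm ▸ hx)
  by_cases ha : IsUnit a
  · exact ⟨v, by rw [hm, span_pair_mul_add_mul_right_of_isUnit ha]⟩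
  have hb : IsUnit b := by
    by_contra hb
    have hu : u ∈ maximalIdeal R := hm ▸ Ideal.subset_span (by simp)
    have hv : v ∈ maximalIdeal R := hm ▸ Ideal.subset_span (by simp)
    exact hx2 <| pow_two (maximalIdeal R) ▸ add_mem
      (Ideal.mul_mem_mul ((mem_maximalIdeal a).2 ha) hu)
      (Ideal.mul_mem_mul ((mem_maximalIdeal b).2 hb) hv)
  exact ⟨u, by rw [hm, span_pair_comm, add_comm, span_pair_mul_add_mul_right_of_isUnit hb]⟩

theorem IsLocalRing.isSMulRegular_of_maximalIdeal_eq_span_singleton [IsNoetherianRing R]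
    [IsLocalRing R] {a : R} (hm : maximalIdeal R = span {a}) (ha : ¬IsNilpotent a) :
    IsSMulRegular R a := by
  refine IsSMulRegular.of_right_eq_zero_of_smul fun t ht => ?_
  rw [smul_eq_mul] at ht
  have hdvd : ∀ k : ℕ, a ^ k ∣ t := by
    intro k
    induction k with
    | zero => simp
    | succ k ih =>
      obtain ⟨s, rfl⟩ := ih
      have hs : s ∈ maximalIdeal R := fun hs =>
        ha ⟨k + 1, hs.mul_left_cancel (by rw [pow_succ', mul_zero, mul_comm, mul_assoc, ht])⟩
      obtain ⟨s', rfl⟩ := Ideal.mem_span_singleton.1 (hm ▸ hs)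
      exact ⟨s', by ring⟩
  rw [← Ideal.mem_bot, ← iInf_pow_eq_bot_of_isLocalRing _ (maximalIdeal.isMaximal R).ne_top,
    Ideal.mem_iInf]
  intro k
  rw [hm, span_singleton_pow, Ideal.mem_span_singleton]
  exact hdvd k

theorem IsLocalRing.isSMulRegular_quotient_of_maximalIdeal_eq_span_pair [IsNoetherianRing R]
    [IsLocalRing R] (hdim : 2 ≤ ringKrullDim R) {x y : R} (hm : maximalIdeal R = span {x, y}) :
    IsSMulRegular (R ⧸ span {y}) x := by
  have hy : y ∈ maximalIdeal R := hm ▸ Ideal.subset_span (by simp)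
  have : Nontrivial (R ⧸ span {y}) :=
    Ideal.Quotient.nontrivial_iff.2 fun h => (mem_maximalIdeal y).1 hy (span_singleton_eq_top.1 h)
  have : IsLocalRing (R ⧸ span {y}) := .of_surjective' _ Ideal.Quotient.mk_surjective
  have hmq : maximalIdeal (R ⧸ span {y}) = span {Ideal.Quotient.mk _ x} := by
    rw [← map_maximalIdeal_of_surjective _ Ideal.Quotient.mk_surjective, hm, Ideal.map_span,
      Set.image_pair, Ideal.Quotient.eq_zero_iff_mem.2 (Ideal.mem_span_singleton_self y),
      span_pair_zero]
  -- A nilpotent generator of its maximal ideal would make `R ⧸ (y)` zero-dimensional,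
  -- whereas `dim R ≤ dim R ⧸ (y) + 1`.
  have hnil : ¬IsNilpotent (Ideal.Quotient.mk (span {y}) x) := by
    intro hx
    have : (nilradical (R ⧸ span {y})).IsMaximal := by
      have hle : maximalIdeal (R ⧸ span {y}) ≤ nilradical _ :=
        hmq ▸ Ideal.span_le.2 (by simpa [mem_nilradical] using hx)
      rw [le_antisymm (nilradical_le_prime _) hle]
      exact maximalIdeal.isMaximal _
    have h0 := Ring.krullDimLE_iff.1 (Ring.KrullDimLE.of_isMaximal_nilradical (R ⧸ span {y}))
    have h1 := height_le_ringKrullDim_quotient_add_one (p := maximalIdeal R) hy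
    rw [maximalIdeal_height_eq_ringKrullDim] at h1
    have := hdim.trans (h1.trans (add_le_add_left h0 1))
    norm_num at this
  rw [← isSMulRegular_algebraMap_iff (R ⧸ span {y}), Ideal.Quotient.algebraMap_eq]
  exact isSMulRegular_of_maximalIdeal_eq_span_singleton hmq hnil

end

theorem mFull_iff_colon_eq_general {R : Type*} [CommRing R] [IsDomain R] [IsNoetherianRing R]
    [IsLocalRing R] (hdim : ringKrullDim R = 2)
    (hreg : ∃ u v : R, maximalIdeal R = Ideal.span {u, v})
    (I : Ideal R) (hI : I.radical = maximalIdeal R) :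
    (∃ x ∈ maximalIdeal R, (maximalIdeal R * I).colon (Ideal.span {x}) = I) ↔
      (∃ x ∈ maximalIdeal R, x ∉ maximalIdeal R ^ 2 ∧
        I.colon (Ideal.span {x}) = I.colon (maximalIdeal R)) := by
  have hItop : I ≠ ⊤ := fun h => (maximalIdeal.isMaximal R).ne_top (by rw [← hI, h, radical_top])
  obtain ⟨N, hN⟩ := exists_pow_le_of_le_radical_of_fg hI.ge (IsNoetherian.noetherian _)
  constructor
  · rintro ⟨x, hx, hfull⟩
    refine ⟨x, hx, fun hx2 => hItop ?_, colon_span_eq_colon_of_mul_colon_eq hx hfull⟩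
    exact eq_top_of_colon_le_of_pow_le
      ((colon_le_mul_colon_span_of_mem_sq hx2).trans hfull.le) hN
  · rintro ⟨x, hx, hx2, hcolon⟩
    obtain ⟨u, v, huv⟩ := hreg
    obtain ⟨y, hxy⟩ := exists_maximalIdeal_eq_span_pair_of_notMem_sq huv hx hx2
    exact ⟨x, hx, mul_colon_span_singleton_eq_of_colon_eq hxy
      (isSMulRegular_quotient_of_maximalIdeal_eq_span_pair hdim.ge hxy) hcolon⟩

/-- For an `𝔪`-primary ideal of a two-dimensional regular local ring with infinite
residue field: `I` is `𝔪`-full iff `I : x = I : 𝔪` for some `x ∈ 𝔪 \ 𝔪²`. -/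
theorem mFull_iff_colon_eq {R : Type*} [CommRing R] [IsDomain R] [IsNoetherianRing R]
    [IsLocalRing R] (hdim : ringKrullDim R = 2)
    (hreg : ∃ u v : R, maximalIdeal R = Ideal.span {u, v})
    (hres : Infinite (ResidueField R))
    (I : Ideal R) (hI : I.radical = maximalIdeal R) :
    (∃ x ∈ maximalIdeal R, (maximalIdeal R * I).colon (Ideal.span {x}) = I) ↔
      (∃ x ∈ maximalIdeal R, x ∉ maximalIdeal R ^ 2 ∧
        I.colon (Ideal.span {x}) = I.colon (maximalIdeal R)) :=
  mFull_iff_colon_eq_general hdim hreg I hI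
end

section
/- Let $(R,\mathfrak{m})$ be a two-dimensional regular local ring with infinite residue field and let $I, J$ be $\mathfrak{m}$-primary ideals. If there exist $x, x' \in \mathfrak{m}$, $a \in I$, $b \in J$ with $\mathfrak{m}I = \mathfrak{m}a + xI$ and $\mathfrak{m}J = \mathfrak{m}b + xJ$, then $\mathfrak{m}(IJ) = \mathfrak{m}(ab) + x(IJ)$; in particular, the product of two contracted $\mathfrak{m}$-primary ideals (contracted with respect to the same element $x$) is contracted. -/
open Ideal IsLocalRing Submodule

/-- The product of two `𝔪`-primary ideals of a two-dimensional regular local ring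
that are contracted with respect to the same element `x` is contracted:
from `𝔪I = 𝔪a + xI` and `𝔪J = 𝔪b + xJ` one gets `𝔪(IJ) = 𝔪(ab) + x(IJ)`. -/
theorem product_contracted {R : Type*} [CommRing R] [IsDomain R] [IsNoetherianRing R]
    [IsLocalRing R] (hdim : ringKrullDim R = 2)
    (hreg : ∃ u v : R, maximalIdeal R = Ideal.span {u, v})
    (hres : Infinite (ResidueField R))
    (I J : Ideal R) (hI : I.radical = maximalIdeal R) (hJ : J.radical = maximalIdeal R)
    (x : R) (hx : x ∈ maximalIdeal R) (a : R) (ha : a ∈ I) (b : R) (hb : b ∈ J)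
    (hIc : maximalIdeal R * I = maximalIdeal R * Ideal.span {a} + Ideal.span {x} * I)
    (hJc : maximalIdeal R * J = maximalIdeal R * Ideal.span {b} + Ideal.span {x} * J) :
    maximalIdeal R * (I * J) =
      maximalIdeal R * Ideal.span {a * b} + Ideal.span {x} * (I * J) := by
  have haI : Ideal.span {a} ≤ I := (Ideal.span_singleton_le_iff_mem _).2 ha
  have habs : Ideal.span {x} * (Ideal.span {a} * J) + Ideal.span {x} * (I * J)
      = Ideal.span {x} * (I * J) := by
    apply sup_eq_right.2
    exact Ideal.mul_mono le_rfl (Ideal.mul_mono haI le_rfl)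
  calc maximalIdeal R * (I * J) = (maximalIdeal R * I) * J := (mul_assoc _ _ _).symm
    _ = (maximalIdeal R * Ideal.span {a} + Ideal.span {x} * I) * J := by rw [hIc]
    _ = Ideal.span {a} * (maximalIdeal R * J) + Ideal.span {x} * (I * J) := by ring
    _ = Ideal.span {a} * (maximalIdeal R * Ideal.span {b} + Ideal.span {x} * J)
          + Ideal.span {x} * (I * J) := by rw [hJc]
    _ = maximalIdeal R * (Ideal.span {a} * Ideal.span {b})
          + (Ideal.span {x} * (Ideal.span {a} * J) + Ideal.span {x} * (I * J)) := by ring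
    _ = maximalIdeal R * Ideal.span {a * b} + Ideal.span {x} * (I * J) := by
          rw [habs, Ideal.span_singleton_mul_span_singleton]
end

section
/- Let $(R,\mathfrak{m})$ be a two-dimensional regular local ring with regular system of parameters $x, y$, let $2 \leq m \leq n$ be integers, and set $I = (x^m) + y^{n-m+1}\mathfrak{m}^{m-1}$ and $Q = (x^m, y^n)$. Then $Q \subseteq I$, $I^2 = QI$, $\mu_R(I) = m+1$, and $\mathrm{o}(I) = m$; in particular $I$ is a contracted stable ideal. -/
/-!
With `m = d + 1` and `n = d + a`, everything reduces to the regularity of `R`: the monomials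
`x^i y^(d-i)` are linearly independent modulo `𝔪^(d+1)`. Krull's principal ideal theorem
gives `x^k ∉ (y)`; with Krull's intersection theorem every `a ∉ (y)` is `u x^j + c y` with `u`
a unit, so `y` is prime, and the independence follows by induction on `d`, cancelling `y`. The same
cancellation shows that the generators `x^m` and `y^a x^i y^(d-i)` of `I` stay independent
modulo `𝔪I`, which gives `μ(I) = m + 1` by a dimension count in `I/𝔪I`, while `x^m ∉ 𝔪^(m+1)`
gives `o(I) = m`. Finally `I² = QI` is checked on monomials.
-/

open Ideal IsLocalRing Submodule

/-- Minimal number of generators of an ideal. -/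
noncomputable def mu {R : Type*} [CommRing R] (I : Ideal R) : ℕ :=
  sInf {n : ℕ | ∃ s : Finset R, s.card = n ∧ Ideal.span (s : Set R) = I}

/-- The order of an ideal: the largest `n` with `I ⊆ 𝔪ⁿ`. -/
noncomputable def ord {R : Type*} [CommRing R] [IsLocalRing R] (I : Ideal R) : ℕ :=
  sSup {n : ℕ | I ≤ IsLocalRing.maximalIdeal R ^ n}

section MinimalGenerators

variable {R : Type*} [CommRing R] [IsLocalRing R] {I : Ideal R} {ι : Type*} [Fintype ι]
  {g : ι → R}

theorem linearIndependent_mk_of_sum_mul_mem_maximalIdeal_mul (hg : ∀ i, g i ∈ I)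
    (hind : ∀ r : ι → R, ∑ i, r i * g i ∈ maximalIdeal R * I →
      ∀ i, r i ∈ maximalIdeal R) :
    LinearIndependent (R ⧸ maximalIdeal R) fun i ↦
      (Submodule.Quotient.mk ⟨g i, hg i⟩ : I ⧸ (maximalIdeal R • ⊤ : Submodule R I)) := by
  rw [Fintype.linearIndependent_iff]
  intro c hc i
  obtain ⟨r, rfl⟩ := Ideal.Quotient.mk_surjective.comp_left c
  simp only [Function.comp_apply, Module.Quotient.mk_smul_mk] at hc
  simp only [← Submodule.mkQ_apply] at hc
  rw [← map_sum, mkQ_apply, Submodule.Quotient.mk_eq_zero, mem_smul_top_iff] at hc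
  refine Ideal.Quotient.eq_zero_iff_mem.mpr (hind r ?_ i)
  simpa using hc

theorem card_le_card_of_span_eq (hg : ∀ i, g i ∈ I)
    (hind : ∀ r : ι → R, ∑ i, r i * g i ∈ maximalIdeal R * I →
      ∀ i, r i ∈ maximalIdeal R)
    {s : Finset R} (hs : span (s : Set R) = I) : Fintype.card ι ≤ s.card := by
  classical
  subst hs
  let f : s → span (s : Set R) := fun t ↦ ⟨t, Ideal.subset_span t.2⟩
  let w := (maximalIdeal R • ⊤ : Submodule R (span (s : Set R))).mkQ ∘ f
  have hspan : Submodule.span (R ⧸ maximalIdeal R) (Set.range w) = ⊤ := by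
    have hf : Set.range f = (↑) ⁻¹' (s : Set R) :=
      Set.ext fun z ↦ ⟨by rintro ⟨t, rfl⟩; exact t.2, fun h ↦ ⟨⟨z, h⟩, rfl⟩⟩
    rw [← Submodule.restrictScalars_eq_top_iff R, Submodule.restrictScalars_span R _
      Ideal.Quotient.mk_surjective, Set.range_comp, ← Submodule.map_span, hf,
      span_span_coe_preimage, Submodule.map_top, range_mkQ]
  calc Fintype.card ι ≤ Fintype.card (Set.range w) := by
        simpa using linearIndependent_le_span _
          (linearIndependent_mk_of_sum_mul_mem_maximalIdeal_mul hg hind) _ hspan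
    _ ≤ s.card := (Fintype.card_range_le w).trans_eq (Fintype.card_coe s)

theorem mu_eq_card (hspan : span (Set.range g) = I)
    (hind : ∀ r : ι → R, ∑ i, r i * g i ∈ maximalIdeal R * I →
      ∀ i, r i ∈ maximalIdeal R) :
    mu I = Fintype.card ι := by
  classical
  have hg (i : ι) : g i ∈ I := hspan ▸ Ideal.subset_span ⟨i, rfl⟩
  have hinj : Function.Injective g := fun i j hij ↦
    (linearIndependent_mk_of_sum_mul_mem_maximalIdeal_mul hg hind).injective (by simp [hij])
  refine le_antisymm (Nat.sInf_le ⟨Finset.univ.image g, ?_, ?_⟩) ?_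
  · rw [Finset.card_image_of_injective _ hinj, Finset.card_univ]
  · rw [Finset.coe_image, Finset.coe_univ, Set.image_univ, hspan]
  · exact le_csInf ⟨_, Finset.univ.image g, rfl, by simp [hspan]⟩
      fun _ ⟨s, hcard, hs⟩ ↦ hcard ▸ card_le_card_of_span_eq hg hind hs

end MinimalGenerators

theorem ord_eq_of_le_of_not_le {R : Type*} [CommRing R] [IsLocalRing R] {I : Ideal R} {k : ℕ}
    (h : I ≤ maximalIdeal R ^ k) (h' : ¬I ≤ maximalIdeal R ^ (k + 1)) : ord I = k :=
  IsGreatest.csSup_eq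
    ⟨h, fun _ hn ↦ not_lt.mp fun hlt ↦ h' (hn.trans (Ideal.pow_le_pow_right hlt))⟩

theorem radical_span_singleton_ne_maximalIdeal {R : Type*} [CommRing R] [IsLocalRing R]
    [IsNoetherianRing R] (hdim : 1 < ringKrullDim R) (a : R) :
    (span {a}).radical ≠ maximalIdeal R := by
  intro h
  have hmin : maximalIdeal R ∈ (span {a}).minimalPrimes := by
    rw [← Ideal.radical_minimalPrimes, h, Ideal.minimalPrimes_eq_subsingleton_self]
    rfl
  have hle := Ideal.height_le_one_of_isPrincipal_of_mem_minimalPrimes _ _ hmin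
  rw [← maximalIdeal_height_eq_ringKrullDim] at hdim
  exact not_le.mpr hdim (by exact_mod_cast hle)

section TwoGeneratedMaximalIdeal

variable {R : Type*} [CommRing R] [IsLocalRing R] {x y : R}

theorem mem_maximalIdeal_left (hm : maximalIdeal R = span {x, y}) : x ∈ maximalIdeal R :=
  hm ▸ Ideal.subset_span (Set.mem_insert x {y})

theorem mem_maximalIdeal_right (hm : maximalIdeal R = span {x, y}) : y ∈ maximalIdeal R :=
  hm ▸ Ideal.subset_span (Set.mem_insert_of_mem x rfl)

theorem monomial_mem_maximalIdeal_pow (hm : maximalIdeal R = span {x, y}) {i j k : ℕ}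
    (h : k ≤ i + j) : x ^ i * y ^ j ∈ maximalIdeal R ^ k :=
  Ideal.pow_le_pow_right h <| pow_add (maximalIdeal R) i j ▸ Ideal.mul_mem_mul
    (pow_mem_pow (mem_maximalIdeal_left hm) i)
    (pow_mem_pow (mem_maximalIdeal_right hm) j)

theorem span_singleton_mul_pow_le (hm : maximalIdeal R = span {x, y}) {J : Ideal R} {k : ℕ}
    {c : R} (h : ∀ i ≤ k, c * (x ^ i * y ^ (k - i)) ∈ J) :
    span {c} * maximalIdeal R ^ k ≤ J := by
  induction k generalizing c with
  | zero => simpa [Ideal.span_le] using h 0 le_rfl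
  | succ k ih =>
    have hsplit : span {c} * maximalIdeal R = span {c * x} ⊔ span {c * y} := by
      rw [hm, Ideal.span_insert, Ideal.mul_sup, span_singleton_mul_span_singleton,
        span_singleton_mul_span_singleton]
    rw [pow_succ', ← mul_assoc, hsplit, Ideal.sup_mul]
    refine sup_le (ih fun i hi ↦ ?_) (ih fun i hi ↦ ?_)
    · convert h (i + 1) (by omega) using 1
      rw [Nat.add_sub_add_right, pow_succ]
      ring
    · convert h i (by omega) using 1
      rw [Nat.sub_add_comm hi, pow_succ]
      ring

theorem pow_succ_le_span_sup_span_mul (hm : maximalIdeal R = span {x, y}) (k : ℕ) :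
    maximalIdeal R ^ (k + 1) ≤ span {x ^ (k + 1)} ⊔ span {y} * maximalIdeal R ^ k := by
  simpa using span_singleton_mul_pow_le hm (c := 1) fun i hi ↦ by
    rcases hi.eq_or_lt with rfl | hi
    · simpa using Ideal.mem_sup_left (Ideal.mem_span_singleton_self _)
    · refine Ideal.mem_sup_right (Ideal.mem_span_singleton_mul.mpr
        ⟨x ^ i * y ^ (k - i), monomial_mem_maximalIdeal_pow hm (by omega), ?_⟩)
      rw [show k + 1 - i = k - i + 1 by omega, pow_succ]
      ring

section Noetherian

variable [IsNoetherianRing R]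

theorem pow_notMem_span_singleton (hm : maximalIdeal R = span {x, y})
    (hdim : 1 < ringKrullDim R) (k : ℕ) : x ^ k ∉ span {y} := by
  intro hk
  refine radical_span_singleton_ne_maximalIdeal hdim y (le_antisymm ?_ ?_)
  · rw [(maximalIdeal.isMaximal R).isPrime.radical_le_iff, Ideal.span_singleton_le_iff_mem, hm]
    exact Ideal.subset_span (by simp)
  · rw [hm, Ideal.span_le]
    rintro _ (rfl | rfl)
    exacts [⟨k, hk⟩, le_radical (Ideal.mem_span_singleton_self _)]

theorem exists_notMem_span_pow_sup_span (hx : x ∈ maximalIdeal R) {a : R}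
    (ha : a ∉ span {y}) : ∃ i, a ∉ span {x ^ i} ⊔ span {y} := by
  by_contra! h
  apply ha
  rw [← Submodule.Quotient.mk_eq_zero, ← Submodule.mem_bot R,
    ← (maximalIdeal R).iInf_pow_smul_eq_bot_of_isLocalRing (maximalIdeal.isMaximal R).ne_top,
    Submodule.mem_iInf]
  intro i
  obtain ⟨_, hs, t, ht, rfl⟩ := Submodule.mem_sup.mp (h i)
  obtain ⟨c, rfl⟩ := mem_span_singleton'.mp hs
  have : Submodule.Quotient.mk (p := span {y}) (c * x ^ i + t) =
      (c * x ^ i) • Submodule.Quotient.mk 1 := by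
    rwa [← Submodule.Quotient.mk_smul, smul_eq_mul, mul_one, Submodule.Quotient.eq,
      add_sub_cancel_left]
  rw [this]
  exact Submodule.smul_mem_smul (Ideal.mul_mem_left _ _ (pow_mem_pow hx i)) mem_top

theorem exists_isUnit_eq_mul_pow_add_mul (hm : maximalIdeal R = span {x, y}) {a : R}
    (ha : a ∉ span {y}) : ∃ u j c, IsUnit u ∧ a = u * x ^ j + c * y := by
  classical
  have hex := exists_notMem_span_pow_sup_span (mem_maximalIdeal_left hm) ha
  obtain ⟨j, hj⟩ : ∃ j, Nat.find hex = j + 1 := Nat.exists_eq_add_one.mpr <|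
    Nat.pos_of_ne_zero fun h0 ↦ by simpa [h0] using Nat.find_spec hex
  have hnot : a ∉ span {x ^ (j + 1)} ⊔ span {y} := hj ▸ Nat.find_spec hex
  obtain ⟨_, hs, _, ht, rfl⟩ := mem_sup.mp (not_not.mp (Nat.find_min hex (by omega : j < _)))
  obtain ⟨u, rfl⟩ := mem_span_singleton'.mp hs
  obtain ⟨c, rfl⟩ := mem_span_singleton'.mp ht
  refine ⟨u, j, c, not_not.mp fun hu ↦ hnot ?_, rfl⟩
  obtain ⟨α, β, rfl⟩ := Ideal.mem_span_pair.mp (hm ▸ (mem_maximalIdeal u).mpr hu)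
  rw [show (α * x + β * y) * x ^ j + c * y = α * x ^ (j + 1) + (β * x ^ j + c) * y by ring]
  exact add_mem_sup (mem_span_singleton'.mpr ⟨α, rfl⟩) (mem_span_singleton'.mpr ⟨_, rfl⟩)

theorem prime_of_maximalIdeal_eq_span_pair (hm : maximalIdeal R = span {x, y})
    (hdim : 1 < ringKrullDim R) : Prime y := by
  have hy : y ∉ span {x} := by
    simpa using pow_notMem_span_singleton (hm.trans (by rw [Set.pair_comm])) hdim 1
  rw [← span_singleton_prime fun h : y = 0 ↦ hy (by rw [h]; exact zero_mem _)]
  refine ⟨span_singleton_ne_top ((mem_maximalIdeal y).mp (mem_maximalIdeal_right hm)),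
    fun {a b} hab ↦ ?_⟩
  by_contra! h
  obtain ⟨u, j, c, hu, rfl⟩ := exists_isUnit_eq_mul_pow_add_mul hm h.1
  obtain ⟨v, k, e, hv, rfl⟩ := exists_isUnit_eq_mul_pow_add_mul hm h.2
  refine pow_notMem_span_singleton hm hdim (j + k) ((unit_mul_mem_iff_mem _ (hu.mul hv)).mp ?_)
  have : u * v * x ^ (j + k) = (u * x ^ j + c * y) * (v * x ^ k + e * y) -
      (u * x ^ j * e + c * v * x ^ k + c * e * y) * y := by
    ring
  rw [this]
  exact sub_mem hab (mem_span_singleton'.mpr ⟨_, rfl⟩)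

variable [IsDomain R]

theorem exists_eq_add_mul_of_pow_mul_add_pow_mul_eq (hm : maximalIdeal R = span {x, y})
    (hdim : 1 < ringKrullDim R) {k a : ℕ} {s t u v : R}
    (h : x ^ k * s + y ^ a * t = x ^ k * u + y ^ a * v) :
    ∃ b, s = u + y ^ a * b ∧ t = v - x ^ k * b := by
  have hy := prime_of_maximalIdeal_eq_span_pair hm hdim
  obtain ⟨b, hb⟩ : y ^ a ∣ s - u := hy.pow_dvd_of_dvd_mul_left a
    (fun hdvd ↦ pow_notMem_span_singleton hm hdim k (mem_span_singleton.mpr hdvd))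
    ⟨v - t, by linear_combination h⟩
  refine ⟨b, by linear_combination hb, ?_⟩
  have : y ^ a * t = y ^ a * (v - x ^ k * b) := by linear_combination h - x ^ k * hb
  exact mul_left_cancel₀ (pow_ne_zero a hy.ne_zero) this

theorem mem_maximalIdeal_of_sum_mul_monomial_mem_pow_succ (hm : maximalIdeal R = span {x, y})
    (hdim : 1 < ringKrullDim R) {d : ℕ} (c : Fin (d + 1) → R)
    (hc : ∑ i, c i * (x ^ (i : ℕ) * y ^ (d - i)) ∈ maximalIdeal R ^ (d + 1))
    (i : Fin (d + 1)) :
    c i ∈ maximalIdeal R := by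
  induction d with
  | zero =>
    rw [Fin.fin_one_eq_zero i]
    simpa using hc
  | succ d ih =>
    set T := ∑ i : Fin (d + 1), c i.castSucc * (x ^ (i : ℕ) * y ^ (d - i))
    have hsum : ∑ i, c i * (x ^ (i : ℕ) * y ^ (d + 1 - i)) =
        x ^ (d + 1) * c (Fin.last _) + y ^ 1 * T := by
      rw [Fin.sum_univ_castSucc, pow_one, Finset.mul_sum, add_comm]
      simp only [Fin.val_castSucc, Fin.val_last, Nat.sub_self, pow_zero, mul_one]
      congr 1
      · ring
      · refine Finset.sum_congr rfl fun j _ ↦ ?_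
        rw [Nat.sub_add_comm (Nat.lt_succ_iff.mp j.2), pow_succ]
        ring
    obtain ⟨_, hα, _, hyz, hsum'⟩ :=
      Submodule.mem_sup.mp (pow_succ_le_span_sup_span_mul hm (d + 1) hc)
    obtain ⟨α, rfl⟩ := mem_span_singleton'.mp hα
    obtain ⟨z, hz, rfl⟩ := Ideal.mem_span_singleton_mul.mp hyz
    obtain ⟨b, hlast, hT⟩ := exists_eq_add_mul_of_pow_mul_add_pow_mul_eq hm hdim
      (s := c (Fin.last _)) (t := T) (u := α * x) (v := z) (by rw [← hsum, ← hsum']; ring)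
    have hx : x ∈ maximalIdeal R := mem_maximalIdeal_left hm
    have hy : y ∈ maximalIdeal R := mem_maximalIdeal_right hm
    refine Fin.lastCases ?_ (fun j ↦ ih (fun j ↦ c j.castSucc) ?_ j) i
    · rw [hlast]
      exact add_mem (Ideal.mul_mem_left _ _ hx) (Ideal.mul_mem_right _ _ (by simpa using hy))
    · change T ∈ _
      rw [hT]
      exact sub_mem hz (Ideal.mul_mem_right _ _ (pow_mem_pow hx _))

theorem pow_notMem_maximalIdeal_pow_succ (hm : maximalIdeal R = span {x, y})
    (hdim : 1 < ringKrullDim R) (k : ℕ) : x ^ k ∉ maximalIdeal R ^ (k + 1) := fun h ↦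
  (maximalIdeal.isMaximal R).ne_top <| (eq_top_iff_one _).mpr <| by
    simpa using mem_maximalIdeal_of_sum_mul_monomial_mem_pow_succ hm hdim
      (Pi.single (Fin.last k) 1) (by simpa [Pi.single_apply] using h) (Fin.last k)

end Noetherian

end TwoGeneratedMaximalIdeal

section ContractedStableIdeal

variable {R : Type*} [CommRing R] [IsLocalRing R] {x y : R} {d a : ℕ}

/-- The ideal `I` of the theorem, with `m = d + 1` and `n = d + a`. -/
def contractedStableIdeal (x y : R) (d a : ℕ) : Ideal R :=
  span {x ^ (d + 1)} + span {y ^ a} * maximalIdeal R ^ d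

def contractedStableIdealGen (x y : R) (d a : ℕ) : Option (Fin (d + 1)) → R
  | none => x ^ (d + 1)
  | some i => y ^ a * (x ^ (i : ℕ) * y ^ (d - i))

theorem span_pair_le_contractedStableIdeal (hm : maximalIdeal R = span {x, y}) :
    span {x ^ (d + 1), y ^ (d + a)} ≤ contractedStableIdeal x y d a := by
  rw [Ideal.span_insert]
  refine sup_le le_sup_left (Ideal.span_singleton_le_iff_mem _ |>.mpr <| Ideal.mem_sup_right <|
    Ideal.mem_span_singleton_mul.mpr ⟨y ^ d, ?_, by ring⟩)
  exact pow_mem_pow (mem_maximalIdeal_right hm) d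

theorem contractedStableIdeal_sq (hm : maximalIdeal R = span {x, y}) (ha : 1 ≤ a) :
    contractedStableIdeal x y d a ^ 2 =
      span {x ^ (d + 1), y ^ (d + a)} * contractedStableIdeal x y d a := by
  set I := contractedStableIdeal x y d a
  set Q : Ideal R := span {x ^ (d + 1), y ^ (d + a)}
  have hxQ : span {x ^ (d + 1)} ≤ Q :=
    Ideal.span_mono (Set.singleton_subset_iff.mpr (Set.mem_insert _ _))
  have hBI : span {y ^ a} * maximalIdeal R ^ d ≤ I := le_sup_right
  refine le_antisymm ?_ (sq I ▸ Ideal.mul_mono_left (span_pair_le_contractedStableIdeal hm))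
  have hBB : span {y ^ a} * maximalIdeal R ^ d * (span {y ^ a} * maximalIdeal R ^ d) =
      span {y ^ a * y ^ a} * maximalIdeal R ^ (d + d) := by
    rw [mul_mul_mul_comm, Ideal.span_singleton_mul_span_singleton, pow_add]
  have hBBle : span {y ^ a * y ^ a} * maximalIdeal R ^ (d + d) ≤ Q * I :=
    span_singleton_mul_pow_le hm fun i hi ↦ by
      -- each such monomial is `y ^ n` or `x ^ m` times an element of `y ^ a 𝔪 ^ d`
      rcases le_or_gt i d with hid | hid
      · have : y ^ a * y ^ a * (x ^ i * y ^ (d + d - i)) =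
            y ^ (d + a) * (y ^ a * (x ^ i * y ^ (d - i))) := by
          rw [show d + d - i = d + (d - i) by omega]
          ring
        rw [this]
        exact Ideal.mul_mem_mul (Ideal.subset_span (Set.mem_insert_of_mem _ rfl))
          (hBI (Ideal.mul_mem_mul (Ideal.mem_span_singleton_self _)
            (monomial_mem_maximalIdeal_pow hm (by omega))))
      · have : y ^ a * y ^ a * (x ^ i * y ^ (d + d - i)) =
            x ^ (d + 1) * (y ^ a * (x ^ (i - (d + 1)) * y ^ (a + (d + d - i)))) := by
          rw [show x ^ i = x ^ (d + 1) * x ^ (i - (d + 1)) by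
            rw [← pow_add, Nat.add_sub_cancel' hid]]
          ring
        rw [this]
        exact Ideal.mul_mem_mul (hxQ (Ideal.mem_span_singleton_self _))
          (hBI (Ideal.mul_mem_mul (Ideal.mem_span_singleton_self _)
            (monomial_mem_maximalIdeal_pow hm (by omega))))
  calc I ^ 2 = span {x ^ (d + 1)} * I + span {y ^ a} * maximalIdeal R ^ d * span {x ^ (d + 1)} +
        span {y ^ a * y ^ a} * maximalIdeal R ^ (d + d) := by
        rw [← hBB, sq]
        simp only [I, contractedStableIdeal]
        ring
    _ ≤ Q * I := by
        refine sup_le (sup_le (Ideal.mul_mono_left hxQ) ?_) hBBle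
        rw [mul_comm]
        exact Ideal.mul_mono hxQ hBI

theorem contractedStableIdeal_le_pow (hm : maximalIdeal R = span {x, y}) (ha : 1 ≤ a) :
    contractedStableIdeal x y d a ≤ maximalIdeal R ^ (d + 1) := by
  refine sup_le (Ideal.span_singleton_le_iff_mem _ |>.mpr ?_) ?_
  · exact pow_mem_pow (mem_maximalIdeal_left hm) _
  · rw [pow_succ']
    refine Ideal.mul_mono_left (Ideal.span_singleton_le_iff_mem _ |>.mpr ?_)
    exact pow_mem_of_mem _ (mem_maximalIdeal_right hm) a ha

theorem ord_contractedStableIdeal [IsDomain R] [IsNoetherianRing R]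
    (hm : maximalIdeal R = span {x, y}) (hdim : 1 < ringKrullDim R) (ha : 1 ≤ a) :
    ord (contractedStableIdeal x y d a) = d + 1 :=
  ord_eq_of_le_of_not_le (contractedStableIdeal_le_pow hm ha) fun h ↦
    pow_notMem_maximalIdeal_pow_succ hm hdim (d + 1)
      (h (Ideal.mem_sup_left (Ideal.mem_span_singleton_self _)))

theorem span_range_contractedStableIdealGen (hm : maximalIdeal R = span {x, y}) :
    span (Set.range (contractedStableIdealGen x y d a)) = contractedStableIdeal x y d a := by
  refine le_antisymm (Ideal.span_le.mpr ?_) (sup_le ?_ ?_)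
  · rintro _ ⟨_ | i, rfl⟩
    · exact Ideal.mem_sup_left (Ideal.mem_span_singleton_self _)
    · exact Ideal.mem_sup_right (Ideal.mul_mem_mul (Ideal.mem_span_singleton_self _)
        (monomial_mem_maximalIdeal_pow hm (by omega)))
  · exact Ideal.span_singleton_le_iff_mem _ |>.mpr (Ideal.subset_span ⟨none, rfl⟩)
  · exact span_singleton_mul_pow_le hm fun i hi ↦
      Ideal.subset_span ⟨some ⟨i, by omega⟩, rfl⟩

theorem mem_maximalIdeal_of_sum_mul_contractedStableIdealGen_mem
    [IsDomain R] [IsNoetherianRing R]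
    (hm : maximalIdeal R = span {x, y}) (hdim : 1 < ringKrullDim R) (ha : 1 ≤ a)
    (r : Option (Fin (d + 1)) → R)
    (hr : ∑ o, r o * contractedStableIdealGen x y d a o ∈
      maximalIdeal R * contractedStableIdeal x y d a) (o : Option (Fin (d + 1))) :
    r o ∈ maximalIdeal R := by
  set T := ∑ i : Fin (d + 1), r (some i) * (x ^ (i : ℕ) * y ^ (d - i))
  have hsum : ∑ o, r o * contractedStableIdealGen x y d a o =
      x ^ (d + 1) * r none + y ^ a * T := by
    rw [Fintype.sum_option, Finset.mul_sum]
    simp only [contractedStableIdealGen, mul_left_comm _ (y ^ a)]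
    ring
  have hMI : maximalIdeal R * contractedStableIdeal x y d a =
      span {x ^ (d + 1)} * maximalIdeal R + span {y ^ a} * maximalIdeal R ^ (d + 1) := by
    rw [contractedStableIdeal, pow_succ']
    ring
  obtain ⟨_, h₁, _, h₂, heq⟩ := Submodule.mem_sup.mp (hMI ▸ hr)
  obtain ⟨z, hz, rfl⟩ := Ideal.mem_span_singleton_mul.mp h₁
  obtain ⟨w, hw, rfl⟩ := Ideal.mem_span_singleton_mul.mp h₂
  obtain ⟨b, hnone, hT⟩ := exists_eq_add_mul_of_pow_mul_add_pow_mul_eq hm hdim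
    (s := r none) (t := T) (u := z) (v := w) (by rw [← hsum, heq])
  cases o with
  | none =>
    rw [hnone]
    exact add_mem hz (Ideal.mul_mem_right _ _ (pow_mem_of_mem _ (mem_maximalIdeal_right hm) a ha))
  | some i =>
    refine mem_maximalIdeal_of_sum_mul_monomial_mem_pow_succ hm hdim (fun i ↦ r (some i)) ?_ i
    change T ∈ _
    rw [hT]
    exact sub_mem hw (Ideal.mul_mem_right _ _ (pow_mem_pow (mem_maximalIdeal_left hm) _))

theorem mu_contractedStableIdeal [IsDomain R] [IsNoetherianRing R]
    (hm : maximalIdeal R = span {x, y}) (hdim : 1 < ringKrullDim R) (ha : 1 ≤ a) :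
    mu (contractedStableIdeal x y d a) = d + 2 := by
  rw [mu_eq_card (span_range_contractedStableIdealGen hm)
    (mem_maximalIdeal_of_sum_mul_contractedStableIdealGen_mem hm hdim ha),
    Fintype.card_option, Fintype.card_fin]

end ContractedStableIdeal

theorem contracted_stable_example_general {R : Type*} [CommRing R] [IsDomain R] [IsNoetherianRing R]
    [IsLocalRing R] (x y : R) (hm : maximalIdeal R = Ideal.span {x, y})
    (hdim : ringKrullDim R = 2)
    (m n : ℕ) (h2m : 2 ≤ m) (hmn : m ≤ n)
    (I Q : Ideal R)
    (hI : I = Ideal.span {x ^ m} + Ideal.span {y ^ (n - m + 1)} * maximalIdeal R ^ (m - 1))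
    (hQ : Q = Ideal.span {x ^ m, y ^ n}) :
    Q ≤ I ∧ I ^ 2 = Q * I ∧ mu I = m + 1 ∧ ord I = m := by
  obtain ⟨d, rfl⟩ : ∃ d, m = d + 1 := ⟨m - 1, by omega⟩
  obtain ⟨a, rfl⟩ : ∃ a, n = d + a := ⟨n - d, by omega⟩
  have ha : 1 ≤ a := by omega
  have hdim' : 1 < ringKrullDim R := by rw [hdim]; decide
  rw [show d + a - (d + 1) + 1 = a by omega, Nat.add_sub_cancel] at hI
  change I = contractedStableIdeal x y d a at hI
  subst hI hQ
  exact ⟨span_pair_le_contractedStableIdeal hm, contractedStableIdeal_sq hm ha,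
    mu_contractedStableIdeal hm hdim' ha, ord_contractedStableIdeal hm hdim' ha⟩

/-- For `2 ≤ m ≤ n` and `I = (xᵐ) + y^(n-m+1) 𝔪^(m-1)`, `Q = (xᵐ, yⁿ)`:
`Q ⊆ I`, `I² = QI`, `μ(I) = m + 1` and `o(I) = m`; in particular `I` is a
contracted stable ideal. -/
theorem contracted_stable_example {R : Type*} [CommRing R] [IsDomain R] [IsNoetherianRing R]
    [IsLocalRing R] (x y : R) (hm : maximalIdeal R = Ideal.span {x, y})
    (hdim : ringKrullDim R = 2) (hres : Infinite (ResidueField R))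
    (m n : ℕ) (h2m : 2 ≤ m) (hmn : m ≤ n)
    (I Q : Ideal R)
    (hI : I = Ideal.span {x ^ m} + Ideal.span {y ^ (n - m + 1)} * maximalIdeal R ^ (m - 1))
    (hQ : Q = Ideal.span {x ^ m, y ^ n}) :
    Q ≤ I ∧ I ^ 2 = Q * I ∧ mu I = m + 1 ∧ ord I = m :=
  contracted_stable_example_general x y hm hdim m n h2m hmn I Q hI hQ
end

section
/- Let $(R,\mathfrak{m})$ be a two-dimensional regular local ring with regular system of parameters $x, y$, and let $2 \leq m \leq n$ be integers. Set $I = (x^m) + y^{n-m+1}\mathfrak{m}^{m-1}$ and $Q = (x^m, y^n)$. Then $Q : I = \mathfrak{m}^{m-1}$. -/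
open Ideal IsLocalRing Submodule

section ColonAux

variable {R : Type*} [CommRing R] [IsDomain R] [IsNoetherianRing R] [IsLocalRing R]

set_option linter.unusedSectionVars false

lemma exists_middle_prime (hdim : ringKrullDim R = 2) :
    ∃ p : Ideal R, p.IsPrime ∧ ⊥ < p ∧ p < maximalIdeal R := by
  have hne : Nonempty (PrimeSpectrum R) := inferInstance
  rw [ringKrullDim, Order.krullDim_eq_iSup_length] at hdim
  have h2 : ∃ c : LTSeries (PrimeSpectrum R), 2 ≤ c.length := by
    by_contra h
    push_neg at h
    have : (⨆ p : LTSeries (PrimeSpectrum R), (p.length : ℕ∞)) ≤ 1 := by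
      refine iSup_le fun c => ?_
      exact_mod_cast Nat.lt_succ_iff.mp (h c)
    have h2 := WithBot.coe_le_coe.mpr this
    rw [hdim] at h2
    norm_num at h2
  obtain ⟨c, hc⟩ := h2
  refine ⟨(c ⟨1, by omega⟩).asIdeal, (c ⟨1, by omega⟩).isPrime, ?_, ?_⟩
  · have h01 : c ⟨0, by omega⟩ < c ⟨1, by omega⟩ := c.strictMono (by simp [Fin.lt_def])
    exact lt_of_le_of_lt bot_le h01
  · have h12 : c ⟨1, by omega⟩ < c ⟨2, by omega⟩ := c.strictMono (by simp [Fin.lt_def])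
    have hle : (c ⟨2, by omega⟩).asIdeal ≤ maximalIdeal R :=
      le_maximalIdeal (c ⟨2, by omega⟩).isPrime.ne_top
    exact lt_of_lt_of_le h12 hle

lemma isArtinian_of_quotient_smul {R : Type*} [CommRing R] (I : Ideal R) {M : Type*}
    [AddCommGroup M] [Module R M] (mod : Module (R ⧸ I) M)
    (hcomp : ∀ (r : R) (x : M), (Ideal.Quotient.mk I r) • x = r • x)
    (ha : IsArtinian (R ⧸ I) M) : IsArtinian R M := by
  refine ⟨?_⟩
  let e : Submodule R M → Submodule (R ⧸ I) M := fun N =>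
    { carrier := N
      add_mem' := fun ha hb => N.add_mem ha hb
      zero_mem' := N.zero_mem
      smul_mem' := by
        rintro c a haa
        obtain ⟨r, rfl⟩ := Ideal.Quotient.mk_surjective c
        show (Ideal.Quotient.mk I r) • a ∈ (N : Set M)
        rw [hcomp]
        exact N.smul_mem r haa }
  have hinj : Function.Injective e := by
    intro N N' hc
    have : (e N : Set M) = (e N' : Set M) := congrArg SetLike.coe hc
    exact SetLike.ext' this
  have hmono : ∀ {N N' : Submodule R M}, N < N' ↔ e N < e N' := by
    intro N N'
    constructor
    · intro hh
      exact lt_of_le_of_ne (fun z hz => hh.le hz) (fun hc => hh.ne (hinj hc))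
    · intro hh
      refine lt_of_le_of_ne (fun z hz => hh.le hz) ?_
      rintro rfl
      exact hh.ne rfl
  exact (RelEmbedding.wellFounded ⟨⟨e, hinj⟩, hmono.symm⟩ ha.wf)

lemma isArtinian_quot_pow (K : ℕ) :
    IsArtinian R (R ⧸ (maximalIdeal R ^ K : Ideal R)) := by
  induction K with
  | zero =>
      have : Subsingleton (R ⧸ (maximalIdeal R ^ 0 : Ideal R)) := by
        rw [pow_zero, Ideal.one_eq_top]
        exact Submodule.Quotient.subsingleton_iff.mpr rfl
      infer_instance
  | succ K IH =>
      set I1 : Ideal R := maximalIdeal R ^ (K + 1) with hI1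
      set I0 : Ideal R := maximalIdeal R ^ K with hI0
      have hle : I1 ≤ I0 := Ideal.pow_le_pow_right (Nat.le_succ K)
      set A : Submodule R (R ⧸ I1) := Submodule.map I1.mkQ I0 with hA
      -- the connecting map
      set g : (R ⧸ I1) →ₗ[R] (R ⧸ I0) := Submodule.mapQ I1 I0 LinearMap.id hle with hg
      have key : ∀ a : R, g (I1.mkQ a) = I0.mkQ a := fun a => by
        show (Submodule.mapQ I1 I0 LinearMap.id hle) (Submodule.Quotient.mk a)
          = Submodule.Quotient.mk a
        rw [Submodule.mapQ_apply]
        rfl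
      have hker : LinearMap.ker g = A := by
        ext z
        obtain ⟨a, rfl⟩ := I1.mkQ_surjective z
        constructor
        · intro hz
          rw [LinearMap.mem_ker, key a] at hz
          have : (a : R) ∈ I0 := by
            rwa [Submodule.mkQ_apply, Submodule.Quotient.mk_eq_zero] at hz
          exact ⟨a, this, rfl⟩
        · rintro ⟨b, hb, hb2⟩
          rw [LinearMap.mem_ker, ← hb2, key b, Submodule.mkQ_apply,
            Submodule.Quotient.mk_eq_zero]
          exact hb
      -- A is artinian
      have hAfg : A.FG := (IsNoetherian.noetherian I0).map _
      have hAfin : Module.Finite R A := Module.Finite.iff_fg.mpr hAfg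
      have htors : Module.IsTorsionBySet R A (maximalIdeal R : Set R) := by
        rintro ⟨z, hz⟩ ⟨r, hr⟩
        obtain ⟨b, hb, rfl⟩ := hz
        have hmem : r • b ∈ I1 := by
          rw [smul_eq_mul, hI1, pow_succ, mul_comm r b]
          exact Ideal.mul_mem_mul hb hr
        ext
        show r • (I1.mkQ b) = (0 : R ⧸ I1)
        rw [← map_smul, Submodule.mkQ_apply, Submodule.Quotient.mk_eq_zero]
        exact hmem
      have hartA2 : IsArtinian R A := by
        letI := htors.module
        refine isArtinian_of_quotient_smul (maximalIdeal R) inferInstance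
          (fun r xx => htors.mk_smul r xx) ?_
        letI := Ideal.Quotient.field (maximalIdeal R)
        obtain ⟨s, hs⟩ := hAfg
        have hsub : (s : Set (R ⧸ I1)) ⊆ (A : Set (R ⧸ I1)) := by
          rw [← hs]; exact Submodule.subset_span
        have hsA : Submodule.span R ((A.subtype) ⁻¹' s : Set A) = ⊤ := by
          refine Submodule.map_injective_of_injective (f := A.subtype)
            Subtype.val_injective ?_
          rw [Submodule.map_span, Submodule.map_top, Submodule.range_subtype,
            Set.image_preimage_eq_of_subset (by simpa using hsub), hs]
        have hfin : Module.Finite (R ⧸ maximalIdeal R) A := by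
          refine ⟨⟨(s.preimage A.subtype (Subtype.val_injective.injOn)), ?_⟩⟩
          rw [eq_top_iff]
          rintro z -
          have hz : z ∈ Submodule.span R ((A.subtype) ⁻¹' s : Set A) := by rw [hsA]; trivial
          refine Submodule.span_induction ?_ ?_ ?_ ?_ hz
          · intro w hw
            exact Submodule.subset_span (by simpa using hw)
          · exact Submodule.zero_mem _
          · intro w v _ _ hw hv
            exact Submodule.add_mem _ hw hv
          · intro r w _ hw
            have : r • w = (Ideal.Quotient.mk (maximalIdeal R) r) • w := by with_unfolding_all rfl
            rw [this]
            exact Submodule.smul_mem _ _ hw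
        exact isArtinian_of_fg_of_artinian'
      exact isArtinian_of_range_eq_ker A.subtype g ((Submodule.range_subtype A).trans hker.symm)

lemma prime_eq_bot_aux (p : Ideal R) (hp : p.IsPrime) (x : R) (hxp : x ∉ p)
    (hxm : x ∈ maximalIdeal R) (K : ℕ) (hK : maximalIdeal R ^ K ≤ Ideal.span {x}) :
    p = ⊥ := by
  classical
  set L := Localization.AtPrime p with hL
  set alg := algebraMap R L with halg
  set q : ℕ → Ideal R := fun n => Ideal.comap alg (Ideal.map alg (p ^ n)) with hq
  have hqanti : ∀ {a b : ℕ}, a ≤ b → q b ≤ q a := fun hab =>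
    Ideal.comap_mono (Ideal.map_mono (Ideal.pow_le_pow_right hab))
  have hqx : ∀ n b, x * b ∈ q n → b ∈ q n := by
    intro n b hb
    have hx : IsUnit (alg x) := IsLocalization.map_units L (⟨x, hxp⟩ : p.primeCompl)
    have h2 : alg x * alg b ∈ Ideal.map alg (p ^ n) := by
      rw [← _root_.map_mul]; exact hb
    exact (Ideal.unit_mul_mem_iff_mem _ hx).mp h2
  -- stabilization of q n ⊔ (x)
  have hart : IsArtinian R (R ⧸ (maximalIdeal R ^ K : Ideal R)) := isArtinian_quot_pow K
  set mk := (maximalIdeal R ^ K : Ideal R).mkQ with hmk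
  have hDanti : ∀ {a b : ℕ}, a ≤ b →
      Submodule.map mk ((q b ⊔ Ideal.span {x} : Ideal R) : Submodule R R)
        ≤ Submodule.map mk ((q a ⊔ Ideal.span {x} : Ideal R) : Submodule R R) := by
    intro a b hab
    exact Submodule.map_mono (sup_le_sup_right (hqanti hab) _)
  set f : ℕ →o (Submodule R (R ⧸ (maximalIdeal R ^ K : Ideal R)))ᵒᵈ :=
    ⟨fun n => Submodule.map mk ((q n ⊔ Ideal.span {x} : Ideal R) : Submodule R R),
     fun a b hab => hDanti hab⟩ with hf
  obtain ⟨N, hN⟩ := IsArtinian.monotone_stabilizes f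
  -- pull back: D n = D N for n ≥ N
  have hD : ∀ n, N ≤ n → (q N ⊔ Ideal.span {x} : Ideal R) = (q n ⊔ Ideal.span {x} : Ideal R) := by
    intro n hn
    have h1 := hN n hn
    have h2 : comap mk (Submodule.map mk ((q N ⊔ Ideal.span {x} : Ideal R) : Submodule R R))
        = comap mk (Submodule.map mk ((q n ⊔ Ideal.span {x} : Ideal R) : Submodule R R)) :=
      congrArg (comap mk) (hN n hn)
    rw [Submodule.comap_map_mkQ, Submodule.comap_map_mkQ] at h2
    have hker : ∀ s : ℕ, (maximalIdeal R ^ K : Ideal R) ⊔ (q s ⊔ Ideal.span {x} : Ideal R)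
        = (q s ⊔ Ideal.span {x} : Ideal R) := by
      intro s
      rw [sup_eq_right]
      exact le_trans hK (le_trans le_sup_right (le_refl _))
    rw [hker N, hker n] at h2
    exact h2
  -- each step : q n ≤ q (n+1) for n ≥ N
  have hstep : ∀ n, N ≤ n → q n = q (n + 1) := by
    intro n hn
    refine le_antisymm ?_ (hqanti (by omega))
    have hsub : q n ≤ q (n + 1) ⊔ Ideal.span {x} • q n := by
      intro z hz
      have hz2 : z ∈ (q (n+1) ⊔ Ideal.span {x} : Ideal R) := by
        rw [← hD (n+1) (by omega), hD n hn]
        exact Ideal.mem_sup_left hz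
      obtain ⟨a, ha, c, hc, hac⟩ := Submodule.mem_sup.mp hz2
      obtain ⟨d, hd⟩ := Ideal.mem_span_singleton'.mp hc
      have hcq : c ∈ q n := by
        have : c = z - a := by rw [← hac]; ring
        rw [this]
        exact Submodule.sub_mem _ hz (hqanti (by omega) ha)
      have hdq : d ∈ q n := by
        apply hqx n
        rw [mul_comm]
        rw [← hd] at hcq
        exact hcq
      have hcmem : c ∈ Ideal.span {x} • q n := by
        rw [smul_eq_mul]
        have hxd : c = x * d := by rw [mul_comm]; exact hd.symm
        rw [hxd]
        exact Ideal.mul_mem_mul (Ideal.mem_span_singleton_self x) hdq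
      rw [← hac]
      exact Submodule.add_mem _ (Ideal.mem_sup_left ha) (Ideal.mem_sup_right hcmem)
    exact Submodule.le_of_le_smul_of_le_jacobson_bot (IsNoetherian.noetherian _)
      (by rw [IsLocalRing.jacobson_eq_maximalIdeal ⊥ bot_ne_top]
          exact (Ideal.span_le).mpr (by simpa using hxm)) hsub
  -- transfer to localization and apply Nakayama there
  have hmc : ∀ n : ℕ, Ideal.map alg (q n) = Ideal.map alg (p ^ n) := by
    intro n
    exact IsLocalization.map_comap p.primeCompl L (Ideal.map alg (p ^ n))
  have hmapst : Ideal.map alg (p ^ N) = Ideal.map alg (p ^ (N + 1)) := by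
    rw [← hmc N, ← hmc (N + 1), hstep N (le_refl N)]
  set J : Ideal L := Ideal.map alg (p ^ N) with hJ
  have hbot : J = ⊥ := by
    refine Submodule.eq_bot_of_le_smul_of_le_jacobson_bot (Ideal.map alg p) J
      (Ideal.FG.map (IsNoetherian.noetherian (p ^ N)) alg) ?_ ?_
    · rw [smul_eq_mul]
      have heq : J = Ideal.map alg p * J := by
        calc J = Ideal.map alg (p ^ (N + 1)) := hmapst
          _ = Ideal.map alg (p ^ N * p) := by rw [pow_succ]
          _ = Ideal.map alg (p ^ N) * Ideal.map alg p := by rw [Ideal.map_mul]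
          _ = Ideal.map alg p * J := by rw [mul_comm, hJ]
      exact le_of_eq heq
    · rw [IsLocalRing.jacobson_eq_maximalIdeal ⊥ bot_ne_top,
        ← Localization.AtPrime.map_eq_maximalIdeal]
  rw [eq_bot_iff]
  intro t ht
  rw [Submodule.mem_bot]
  by_contra ht0
  have htN : alg t ^ N ∈ J := by
    rw [hJ, ← _root_.map_pow]
    exact Ideal.mem_map_of_mem alg (Ideal.pow_mem_pow ht N)
  rw [hbot, Submodule.mem_bot] at htN
  have halgt : alg t = 0 := by
    rcases Nat.eq_zero_or_pos N with h0 | hpos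
    · exfalso; rw [h0, pow_zero] at htN; exact one_ne_zero htN
    · exact (pow_eq_zero_iff (by omega)).mp htN
  have hinj : Function.Injective alg := IsLocalization.injective L p.primeCompl_le_nonZeroDivisors
  have : t = 0 := by
    apply hinj
    rw [halgt, map_zero]
  exact ht0 this

lemma pair_pow_le (x y : R) :
    ∀ a b : ℕ, (Ideal.span {x, y}) ^ (a + b + 1) ≤ Ideal.span {x ^ (a + 1), y ^ (b + 1)} := by
  have H : ∀ (a b : ℕ) (I : Ideal R), I ≤ Ideal.span {x ^ a, y ^ (b + 1)} →
      I ≤ Ideal.span {x ^ (a + 1), y ^ b} →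
      Ideal.span {x, y} * I ≤ Ideal.span {x ^ (a + 1), y ^ (b + 1)} := by
    intro a b I h1 h2
    rw [Ideal.mul_le]
    intro r hr s hs
    obtain ⟨u, v, huv⟩ := Ideal.mem_span_pair.mp hr
    have hxs : x * s ∈ Ideal.span {x ^ (a + 1), y ^ (b + 1)} := by
      obtain ⟨c, d, hcd⟩ := Ideal.mem_span_pair.mp (h1 hs)
      exact Ideal.mem_span_pair.mpr ⟨c, d * x, by rw [← hcd]; ring⟩
    have hys : y * s ∈ Ideal.span {x ^ (a + 1), y ^ (b + 1)} := by
      obtain ⟨c, d, hcd⟩ := Ideal.mem_span_pair.mp (h2 hs)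
      exact Ideal.mem_span_pair.mpr ⟨c * y, d, by rw [← hcd]; ring⟩
    have : r * s = u * (x * s) + v * (y * s) := by rw [← huv]; ring
    rw [this]
    exact Ideal.add_mem _ (Ideal.mul_mem_left _ _ hxs) (Ideal.mul_mem_left _ _ hys)
  have htop : ∀ c : ℕ, Ideal.span {x ^ 0, y ^ c} = ⊤ := by
    intro c
    rw [Ideal.eq_top_iff_one]
    exact Ideal.mem_span_pair.mpr ⟨1, 0, by ring⟩
  have htop' : ∀ c : ℕ, Ideal.span {x ^ c, y ^ 0} = ⊤ := by
    intro c
    rw [Ideal.eq_top_iff_one]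
    exact Ideal.mem_span_pair.mpr ⟨0, 1, by ring⟩
  have main : ∀ s a b : ℕ, a + b = s →
      (Ideal.span {x, y}) ^ (a + b + 1) ≤ Ideal.span {x ^ (a + 1), y ^ (b + 1)} := by
    intro s
    induction s using Nat.strong_induction_on with
    | _ s IH =>
      intro a b hab
      have hsplit : (Ideal.span {x, y} : Ideal R) ^ (a + b + 1)
          = Ideal.span {x, y} * (Ideal.span {x, y}) ^ (a + b) := by
        rw [pow_succ, mul_comm]
      rw [hsplit]
      refine H a b _ ?_ ?_
      · rcases Nat.eq_zero_or_pos a with rfl | ha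
        · rw [htop]; exact le_top
        · obtain ⟨a', rfl⟩ := Nat.exists_eq_add_of_le ha  -- a = 1 + a'
          have := IH (a' + b) (by omega) a' b rfl
          calc (Ideal.span {x, y} : Ideal R) ^ (1 + a' + b)
              = (Ideal.span {x, y}) ^ (a' + b + 1) := by ring_nf
            _ ≤ Ideal.span {x ^ (a' + 1), y ^ (b + 1)} := this
            _ = Ideal.span {x ^ (1 + a'), y ^ (b + 1)} := by rw [Nat.add_comm a' 1]
      · rcases Nat.eq_zero_or_pos b with rfl | hb
        · rw [htop']; exact le_top
        · obtain ⟨b', rfl⟩ := Nat.exists_eq_add_of_le hb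
          have := IH (a + b') (by omega) a b' rfl
          calc (Ideal.span {x, y} : Ideal R) ^ (a + (1 + b'))
              = (Ideal.span {x, y}) ^ (a + b' + 1) := by ring_nf
            _ ≤ Ideal.span {x ^ (a + 1), y ^ (b' + 1)} := this
            _ = Ideal.span {x ^ (a + 1), y ^ (1 + b')} := by rw [Nat.add_comm b' 1]
  intro a b
  exact main (a + b) a b rfl


lemma y_pow_notMem (x y : R) (hm : maximalIdeal R = Ideal.span {x, y})
    (hdim : ringKrullDim R = 2) : ∀ k : ℕ, y ^ k ∉ Ideal.span {x} := by
  intro k hk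
  have hxm : x ∈ maximalIdeal R := by
    rw [hm]; exact Ideal.subset_span (by simp)
  have hrad : maximalIdeal R ≤ (Ideal.span {x}).radical := by
    rw [hm, Ideal.span_le]
    rintro t ht
    rcases Set.mem_insert_iff.mp ht with h | h
    · rw [h]; exact Ideal.le_radical (Ideal.mem_span_singleton_self x)
    · rw [Set.mem_singleton_iff.mp h]; exact ⟨k, hk⟩
  obtain ⟨K, hK⟩ := Ideal.exists_pow_le_of_le_radical_of_fg hrad
    (IsNoetherian.noetherian (maximalIdeal R))
  obtain ⟨p, hp, hbot, hlt⟩ := exists_middle_prime hdim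
  have hxp : x ∉ p := by
    intro hxp
    have : maximalIdeal R ≤ p := by
      refine le_trans hrad ?_
      rw [← hp.radical]
      exact Ideal.radical_mono (by rwa [Ideal.span_le, Set.singleton_subset_iff])
    exact absurd (lt_of_lt_of_le hlt this) (lt_irrefl p)
  exact absurd (prime_eq_bot_aux p hp x hxp hxm K hK) (ne_of_gt hbot)

lemma reg_xy (x y : R) (hm : maximalIdeal R = Ideal.span {x, y})
    (hdim : ringKrullDim R = 2) :
    ∀ z : R, y * z ∈ Ideal.span {x} → z ∈ Ideal.span {x} := by
  intro z hz
  have hynil := y_pow_notMem x y hm hdim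
  have hym : y ∈ maximalIdeal R := by rw [hm]; exact Ideal.subset_span (by simp)
  -- z ∈ (x) + m^k for all k
  have hstep : ∀ v : R, y * v ∈ Ideal.span {x} → ∀ k : ℕ, v ∈ Ideal.span {x} ⊔ maximalIdeal R ^ k →
      v ∈ Ideal.span {x} ⊔ maximalIdeal R ^ (k + 1) := by
    intro v hv k hvk
    obtain ⟨u, hu, w, hw, huw⟩ := Submodule.mem_sup.mp hvk
    have hwk : w ∈ Ideal.span {x, y ^ k} := by
      rcases Nat.eq_zero_or_pos k with rfl | hk
      · exact Ideal.mem_span_pair.mpr ⟨0, w, by ring⟩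
      · obtain ⟨k', rfl⟩ := Nat.exists_eq_add_of_le hk
        have h1 : maximalIdeal R ^ (1 + k') ≤ Ideal.span {x ^ 1, y ^ (1 + k')} := by
          have := pair_pow_le x y 0 k'
          rw [hm]
          calc (Ideal.span {x, y} : Ideal R) ^ (1 + k')
              = (Ideal.span {x, y}) ^ (0 + k' + 1) := by ring_nf
            _ ≤ Ideal.span {x ^ (0 + 1), y ^ (k' + 1)} := this
            _ = Ideal.span {x ^ 1, y ^ (1 + k')} := by rw [Nat.add_comm k' 1]
        have := h1 hw
        rwa [pow_one] at this
    obtain ⟨c, d, hcd⟩ := Ideal.mem_span_pair.mp hwk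
    -- y * w ∈ (x)
    have hyw : y * w ∈ Ideal.span {x} := by
      have hxu : y * u ∈ Ideal.span {x} := Ideal.mul_mem_left _ _ hu
      have : y * w = y * v - y * u := by rw [← huw]; ring
      rw [this]
      exact Submodule.sub_mem _ hv hxu
    have hdy : d * y ^ (k + 1) ∈ Ideal.span {x} := by
      have : d * y ^ (k + 1) = y * w - c * x * y := by rw [← hcd]; ring
      rw [this]
      exact Submodule.sub_mem _ hyw (Ideal.mem_span_singleton.mpr ⟨c * y, by ring⟩)
    have hdm : d ∈ maximalIdeal R := by
      by_contra hd
      have hdu : IsUnit d := not_not.mp (fun hnotu => hd (hnotu : d ∈ nonunits R))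
      obtain ⟨e, he⟩ := hdu.exists_left_inv
      have : y ^ (k + 1) ∈ Ideal.span {x} := by
        have : y ^ (k + 1) = e * (d * y ^ (k + 1)) := by rw [← mul_assoc, he, one_mul]
        rw [this]
        exact Ideal.mul_mem_left _ _ hdy
      exact hynil (k + 1) this
    have hwmem : w ∈ Ideal.span {x} ⊔ maximalIdeal R ^ (k + 1) := by
      rw [← hcd]
      refine Submodule.add_mem _ ?_ ?_
      · exact Submodule.mem_sup_left (Ideal.mem_span_singleton.mpr ⟨c, mul_comm c x⟩)
      · refine Submodule.mem_sup_right ?_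
        rw [pow_succ']
        exact Ideal.mul_mem_mul hdm (Ideal.pow_mem_pow hym k)
    rw [← huw]
    exact Submodule.add_mem _ (Submodule.mem_sup_left hu) hwmem
  have hall : ∀ k : ℕ, z ∈ Ideal.span {x} ⊔ maximalIdeal R ^ k := by
    intro k
    induction k with
    | zero => rw [pow_zero, Ideal.one_eq_top]; exact Submodule.mem_sup_right Submodule.mem_top
    | succ k IH => exact hstep z hz k IH
  -- Krull intersection on R/(x)
  have hfin : Module.Finite R (R ⧸ (Ideal.span {x} : Ideal R)) := inferInstance
  have hKrull := Ideal.iInf_pow_smul_eq_bot_of_isLocalRing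
    (I := maximalIdeal R) (M := R ⧸ (Ideal.span {x} : Ideal R))
    (Ideal.IsMaximal.ne_top (maximalIdeal.isMaximal R))
  have hzq : (Ideal.span {x} : Ideal R).mkQ z = 0 := by
    rw [← Submodule.mem_bot (R := R), ← hKrull]
    refine Submodule.mem_iInf _ |>.mpr ?_
    intro k
    have := hall k
    obtain ⟨u, hu, w, hw, huw⟩ := Submodule.mem_sup.mp this
    have : (Ideal.span {x} : Ideal R).mkQ z = (Ideal.span {x} : Ideal R).mkQ w := by
      rw [← huw, map_add]
      have : (Ideal.span {x} : Ideal R).mkQ u = 0 := by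
        rwa [Submodule.mkQ_apply, Submodule.Quotient.mk_eq_zero]
      rw [this, zero_add]
    rw [this]
    have hmem : (Ideal.span {x} : Ideal R).mkQ w
        ∈ Submodule.map (Ideal.span {x} : Ideal R).mkQ (maximalIdeal R ^ k) :=
      Submodule.mem_map_of_mem hw
    have hmap : Submodule.map (Ideal.span {x} : Ideal R).mkQ
          ((maximalIdeal R ^ k : Ideal R) : Submodule R R)
        ≤ maximalIdeal R ^ k • (⊤ : Submodule R (R ⧸ (Ideal.span {x} : Ideal R))) := by
      rintro _ ⟨a, ha, rfl⟩
      have : (Ideal.span {x} : Ideal R).mkQ a = a • ((Ideal.span {x} : Ideal R)).mkQ 1 := by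
        rw [← map_smul, smul_eq_mul, mul_one]
      rw [this]
      exact Submodule.smul_mem_smul ha Submodule.mem_top
    exact hmap hmem
  rwa [Submodule.mkQ_apply, Submodule.Quotient.mk_eq_zero] at hzq

-- iterated regularity: (x) : y^d = (x)
lemma reg_pow (x y : R) (hreg : ∀ z : R, y * z ∈ Ideal.span {x} → z ∈ Ideal.span {x}) :
    ∀ (d : ℕ) (w : R), y ^ d * w ∈ Ideal.span {x} → w ∈ Ideal.span {x} := by
  intro d
  induction d with
  | zero => intro w hw; rwa [pow_zero, one_mul] at hw
  | succ d IH =>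
      intro w hw
      refine IH w (hreg (y ^ d * w) ?_)
      have : y * (y ^ d * w) = y ^ (d + 1) * w := by ring
      rwa [this]

-- single cancellation of x
lemma cancel_x (x y : R) (hx0 : x ≠ 0)
    (hreg : ∀ z : R, y * z ∈ Ideal.span {x} → z ∈ Ideal.span {x}) :
    ∀ (c d : ℕ) (z : R), 1 ≤ c → z * x ∈ Ideal.span {x ^ c, y ^ d} →
      z ∈ Ideal.span {x ^ (c - 1), y ^ d} := by
  intro c d z hc hz
  obtain ⟨a, b, hab⟩ := Ideal.mem_span_pair.mp hz
  have hby : y ^ d * b ∈ Ideal.span {x} := by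
    refine Ideal.mem_span_singleton.mpr ⟨z - a * x ^ (c - 1), ?_⟩
    have hxc : x ^ c = x ^ (c - 1) * x := by
      rw [← pow_succ]
      congr 1
      omega
    have : b * y ^ d = z * x - a * x ^ c := by rw [← hab]; ring
    rw [hxc] at this
    calc y ^ d * b = b * y ^ d := by ring
      _ = z * x - a * (x ^ (c - 1) * x) := this
      _ = x * (z - a * x ^ (c - 1)) := by ring
  obtain ⟨b', hb'⟩ := Ideal.mem_span_singleton.mp (reg_pow x y hreg d b hby)
  have hxc : x ^ c = x ^ (c - 1) * x := by
    rw [← pow_succ]; congr 1; omega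
  have key : x * (z - (a * x ^ (c - 1) + b' * y ^ d)) = 0 := by
    have h1 : a * x ^ c + b * y ^ d = z * x := hab
    rw [hxc, hb'] at h1
    calc x * (z - (a * x ^ (c - 1) + b' * y ^ d))
        = z * x - (a * (x ^ (c - 1) * x) + x * b' * y ^ d) := by ring
      _ = 0 := by rw [← h1]; ring
  have : z - (a * x ^ (c - 1) + b' * y ^ d) = 0 := by
    rcases mul_eq_zero.mp key with h | h
    · exact absurd h hx0
    · exact h
  have hz' : z = a * x ^ (c - 1) + b' * y ^ d := by
    have := sub_eq_zero.mp this
    exact this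
  exact Ideal.mem_span_pair.mpr ⟨a, b', hz'.symm⟩

-- iterated cancellation of x^i
lemma cancel_xs (x y : R) (hx0 : x ≠ 0)
    (hreg : ∀ z : R, y * z ∈ Ideal.span {x} → z ∈ Ideal.span {x}) :
    ∀ (i c d : ℕ) (z : R), i ≤ c → z * x ^ i ∈ Ideal.span {x ^ c, y ^ d} →
      z ∈ Ideal.span {x ^ (c - i), y ^ d} := by
  intro i
  induction i with
  | zero =>
      intro c d z _ hz
      rw [pow_zero, mul_one] at hz
      rwa [Nat.sub_zero]
  | succ i IH =>
      intro c d z hic hz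
      have h1 : (z * x) * x ^ i ∈ Ideal.span {x ^ c, y ^ d} := by
        have : (z * x) * x ^ i = z * x ^ (i + 1) := by ring
        rwa [this]
      have h2 := IH c d (z * x) (by omega) h1
      have h3 := cancel_x x y hx0 hreg (c - i) d z (by omega) h2
      have : c - i - 1 = c - (i + 1) := by omega
      rwa [this] at h3

lemma inter_to_pow (x y : R) (hm : maximalIdeal R = Ideal.span {x, y}) (hx0 : x ≠ 0)
    (hreg : ∀ z : R, y * z ∈ Ideal.span {x} → z ∈ Ideal.span {x}) :
    ∀ (k : ℕ) (z : R), (∀ a : ℕ, 1 ≤ a → a ≤ k → z ∈ Ideal.span {x ^ a, y ^ (k + 1 - a)}) →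
      z ∈ maximalIdeal R ^ k := by
  have hxm : x ∈ maximalIdeal R := by rw [hm]; exact Ideal.subset_span (by simp)
  have hym : y ∈ maximalIdeal R := by rw [hm]; exact Ideal.subset_span (by simp)
  intro k
  induction k with
  | zero => intro z _; rw [pow_zero, Ideal.one_eq_top]; trivial
  | succ k IH =>
      intro z hz
      have h1 := hz 1 (by omega) (by omega)
      have h1' : z ∈ Ideal.span {x ^ 1, y ^ (k + 1)} := by
        have : k + 1 + 1 - 1 = k + 1 := by omega
        rwa [this] at h1
      obtain ⟨u, v, huv⟩ := Ideal.mem_span_pair.mp h1'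
      have hu : u ∈ maximalIdeal R ^ k := by
        refine IH u ?_
        intro a ha hak
        have hza := hz (a + 1) (by omega) (by omega)
        have hza' : z ∈ Ideal.span {x ^ (a + 1), y ^ (k + 1 - a)} := by
          have : k + 1 + 1 - (a + 1) = k + 1 - a := by omega
          rwa [this] at hza
        have hux : u * x ∈ Ideal.span {x ^ (a + 1), y ^ (k + 1 - a)} := by
          have hv : v * y ^ (k + 1) ∈ Ideal.span {x ^ (a + 1), y ^ (k + 1 - a)} := by
            refine Ideal.mem_span_pair.mpr ⟨0, v * y ^ a, ?_⟩
            have hyy : y ^ a * y ^ (k + 1 - a) = y ^ (k + 1) := by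
              rw [← pow_add]
              congr 1
              omega
            calc 0 * x ^ (a + 1) + v * y ^ a * y ^ (k + 1 - a)
                = v * (y ^ a * y ^ (k + 1 - a)) := by ring
              _ = v * y ^ (k + 1) := by rw [hyy]
          have : u * x = z - v * y ^ (k + 1) := by
            rw [← huv, pow_one]; ring
          rw [this]
          exact Submodule.sub_mem _ hza' hv
        have := cancel_x x y hx0 hreg (a + 1) (k + 1 - a) u (by omega) hux
        have ha1 : a + 1 - 1 = a := by omega
        rwa [ha1] at this
      have hz2 : z = u * x + v * y ^ (k + 1) := by rw [← huv, pow_one]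
      rw [hz2, pow_succ]
      refine Submodule.add_mem _ ?_ ?_
      · exact Ideal.mul_mem_mul hu hxm
      · have h4 : v * (y ^ k * y) = (v * y ^ k) * y := by ring
        rw [pow_succ, h4]
        exact Ideal.mul_mem_mul (Ideal.mul_mem_left _ v (Ideal.pow_mem_pow hym k)) hym

end ColonAux

/-- For `2 ≤ m ≤ n`, `I = (xᵐ) + y^(n-m+1) 𝔪^(m-1)` and `Q = (xᵐ, yⁿ)`,
one has `Q : I = 𝔪^(m-1)`. -/
theorem colon_eq_pow_maximalIdeal {R : Type*} [CommRing R] [IsDomain R] [IsNoetherianRing R]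
    [IsLocalRing R] (x y : R) (hm : maximalIdeal R = Ideal.span {x, y})
    (hdim : ringKrullDim R = 2)
    (m n : ℕ) (h2m : 2 ≤ m) (hmn : m ≤ n)
    (I Q : Ideal R)
    (hI : I = Ideal.span {x ^ m} + Ideal.span {y ^ (n - m + 1)} * maximalIdeal R ^ (m - 1))
    (hQ : Q = Ideal.span {x ^ m, y ^ n}) :
    Q.colon I = maximalIdeal R ^ (m - 1) := by
  have hxm : x ∈ maximalIdeal R := by rw [hm]; exact Ideal.subset_span (by simp)
  have hym : y ∈ maximalIdeal R := by rw [hm]; exact Ideal.subset_span (by simp)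
  have hm' : maximalIdeal R = Ideal.span {y, x} := by rw [hm, Set.pair_comm]
  have hregx : ∀ z : R, y * z ∈ Ideal.span {x} → z ∈ Ideal.span {x} := reg_xy x y hm hdim
  have hregy : ∀ z : R, x * z ∈ Ideal.span {y} → z ∈ Ideal.span {y} := reg_xy y x hm' hdim
  have hx0 : x ≠ 0 := by
    intro h
    exact y_pow_notMem y x hm' hdim 1 (by rw [pow_one, h]; exact Ideal.zero_mem _)
  have hy0 : y ≠ 0 := by
    intro h
    exact y_pow_notMem x y hm hdim 1 (by rw [pow_one, h]; exact Ideal.zero_mem _)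
  refine le_antisymm ?_ ?_
  · -- hard direction : Q : I ≤ 𝔪^(m-1)
    intro z hz
    refine inter_to_pow x y hm hx0 hregx (m - 1) z ?_
    intro a ha hak
    have hw : x ^ (m - a) * y ^ (a - 1) ∈ maximalIdeal R ^ (m - 1) := by
      have hsp : maximalIdeal R ^ (m - 1)
          = maximalIdeal R ^ (m - a) * maximalIdeal R ^ (a - 1) := by
        rw [← pow_add]; congr 1; omega
      rw [hsp]
      exact Ideal.mul_mem_mul (Ideal.pow_mem_pow hxm _) (Ideal.pow_mem_pow hym _)
    have hiI : y ^ (n - m + 1) * (x ^ (m - a) * y ^ (a - 1)) ∈ I := by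
      rw [hI, Submodule.add_eq_sup]
      exact Submodule.mem_sup_right
        (Ideal.mul_mem_mul (Ideal.mem_span_singleton_self _) hw)
    have hzQ : z * (y ^ (n - m + 1) * (x ^ (m - a) * y ^ (a - 1))) ∈ Q := by
      have := Submodule.mem_colon.mp hz _ hiI
      rwa [smul_eq_mul] at this
    have hz2 : (z * y ^ (n - m + a)) * x ^ (m - a) ∈ Ideal.span {x ^ m, y ^ n} := by
      rw [hQ] at hzQ
      have hyy : y ^ (n - m + 1) * y ^ (a - 1) = y ^ (n - m + a) := by
        rw [← pow_add]; congr 1; omega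
      have hre : z * (y ^ (n - m + 1) * (x ^ (m - a) * y ^ (a - 1)))
          = (z * y ^ (n - m + a)) * x ^ (m - a) := by
        rw [← hyy]; ring
      rwa [hre] at hzQ
    have hz3 := cancel_xs x y hx0 hregx (m - a) m n (z * y ^ (n - m + a)) (by omega) hz2
    have hz4 : (z * y ^ (n - m + a)) ∈ Ideal.span {x ^ a, y ^ n} := by
      have : m - (m - a) = a := by omega
      rwa [this] at hz3
    have hz5 : z * y ^ (n - m + a) ∈ Ideal.span {y ^ n, x ^ a} := by
      rwa [Set.pair_comm] at hz4
    have hz6 := cancel_xs y x hy0 hregy (n - m + a) n a z (by omega) hz5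
    have hz7 : z ∈ Ideal.span {y ^ (m - a), x ^ a} := by
      have : n - (n - m + a) = m - a := by omega
      rwa [this] at hz6
    have : m - 1 + 1 - a = m - a := by omega
    rw [this, Set.pair_comm]
    exact hz7
  · -- easy direction : 𝔪^(m-1) ≤ Q : I
    intro z hz
    rw [Submodule.mem_colon]
    intro i hiI
    rw [smul_eq_mul, hQ]
    rw [hI, Submodule.add_eq_sup] at hiI
    obtain ⟨i1, hi1, i2, hi2, rfl⟩ := Submodule.mem_sup.mp hiI
    rw [mul_add]
    refine Submodule.add_mem _ ?_ ?_
    · obtain ⟨c, hc⟩ := Ideal.mem_span_singleton.mp hi1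
      refine Ideal.mem_span_pair.mpr ⟨z * c, 0, ?_⟩
      rw [hc]; ring
    · -- z * i2 where i2 ∈ (y^(n-m+1)) * 𝔪^(m-1)
      have hzi : z * i2 ∈ Ideal.span {z} *
          (Ideal.span {y ^ (n - m + 1)} * maximalIdeal R ^ (m - 1)) :=
        Ideal.mul_mem_mul (Ideal.mem_span_singleton_self z) hi2
      have hle : Ideal.span {z} *
          (Ideal.span {y ^ (n - m + 1)} * maximalIdeal R ^ (m - 1))
          ≤ Ideal.span {x ^ m, y ^ n} := by
        have h1 : Ideal.span {z} *
            (Ideal.span {y ^ (n - m + 1)} * maximalIdeal R ^ (m - 1))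
            = Ideal.span {y ^ (n - m + 1)} *
              (Ideal.span {z} * maximalIdeal R ^ (m - 1)) := by
          ring
        rw [h1]
        have h2 : Ideal.span {z} * maximalIdeal R ^ (m - 1)
            ≤ maximalIdeal R ^ (m - 1) * maximalIdeal R ^ (m - 1) := by
          refine Ideal.mul_mono_left ?_
          rw [Ideal.span_le, Set.singleton_subset_iff]
          exact hz
        have h3 : maximalIdeal R ^ (m - 1) * maximalIdeal R ^ (m - 1)
            ≤ Ideal.span {x ^ m, y ^ (m - 1)} := by
          rw [← pow_add, hm]
          have he : m - 1 + (m - 1) = (m - 1) + (m - 2) + 1 := by omega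
          rw [he]
          have := pair_pow_le x y (m - 1) (m - 2)
          have he2 : m - 1 + 1 = m := by omega
          have he3 : m - 2 + 1 = m - 1 := by omega
          rwa [he2, he3] at this
        have h4 : Ideal.span {y ^ (n - m + 1)} * Ideal.span {x ^ m, y ^ (m - 1)}
            ≤ Ideal.span {x ^ m, y ^ n} := by
          rw [Ideal.mul_le]
          intro r hr s hs
          obtain ⟨e, he⟩ := Ideal.mem_span_singleton.mp hr
          obtain ⟨c, d, hcd⟩ := Ideal.mem_span_pair.mp hs
          refine Ideal.mem_span_pair.mpr ⟨e * c * y ^ (n - m + 1), e * d, ?_⟩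
          have hyy : y ^ (n - m + 1) * y ^ (m - 1) = y ^ n := by
            rw [← pow_add]; congr 1; omega
          rw [he, ← hcd, ← hyy]; ring
        calc Ideal.span {y ^ (n - m + 1)} *
              (Ideal.span {z} * maximalIdeal R ^ (m - 1))
            ≤ Ideal.span {y ^ (n - m + 1)} *
              (maximalIdeal R ^ (m - 1) * maximalIdeal R ^ (m - 1)) :=
              Ideal.mul_mono_right h2
          _ ≤ Ideal.span {y ^ (n - m + 1)} * Ideal.span {x ^ m, y ^ (m - 1)} :=
              Ideal.mul_mono_right h3
          _ ≤ Ideal.span {x ^ m, y ^ n} := h4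
      exact hle hzi
end

section
/- Let $(R,\mathfrak{m})$ be a two-dimensional regular local ring with regular system of parameters $x, y$, $2 \leq m \leq n$ integers, $I = (x^m) + y^{n-m+1}\mathfrak{m}^{m-1}$, and $J = \mathfrak{m}^{m-1}$. Then $IJ = Iy^{m-1} + x^m J$ and $\mathfrak{m}J = \mathfrak{m}y^{m-1} + xJ$. -/
open Ideal IsLocalRing Submodule


section Aux
variable {R : Type*} [CommRing R] (x y : R)

lemma my_add_le {I J K : Ideal R} (h1 : I ≤ K) (h2 : J ≤ K) : I + J ≤ K := by
  rw [Ideal.add_eq_sup]; exact sup_le h1 h2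

lemma my_le_add_left {I J : Ideal R} : I ≤ I + J := by
  rw [Ideal.add_eq_sup]; exact le_sup_left

lemma my_le_add_right {I J : Ideal R} : J ≤ I + J := by
  rw [Ideal.add_eq_sup]; exact le_sup_right

lemma aux_pair : (Ideal.span {x, y} : Ideal R) = Ideal.span {x} + Ideal.span {y} := by
  rw [Ideal.span_insert, Ideal.add_eq_sup]

lemma aux_xle : (Ideal.span {x} : Ideal R) ≤ Ideal.span {x, y} :=
  Ideal.span_mono (by simp)

lemma aux_yle : (Ideal.span {y} : Ideal R) ≤ Ideal.span {x, y} :=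
  Ideal.span_mono (by simp)

lemma aux_ypow (k : ℕ) : (Ideal.span {y ^ k} : Ideal R) ≤ Ideal.span {x, y} ^ k := by
  rw [Ideal.span_singleton_le_iff_mem]
  exact pow_mem_pow (Ideal.subset_span (by simp)) k

lemma aux_xpow (k : ℕ) : (Ideal.span {x ^ k} : Ideal R) ≤ Ideal.span {x, y} ^ k := by
  rw [Ideal.span_singleton_le_iff_mem]
  exact pow_mem_pow (Ideal.subset_span (by simp)) k

lemma aux_yy (k : ℕ) :
    (Ideal.span {y} : Ideal R) * Ideal.span {y ^ k} = Ideal.span {y ^ (k + 1)} := by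
  rw [Ideal.span_singleton_mul_span_singleton, ← pow_succ']

/-- key step: `M · (y^k) · M ≤ M·(y^(k+1)) + (x)·M^(k+1)` where `M = (x,y)`. -/
lemma aux_step (k : ℕ) :
    Ideal.span {x, y} * Ideal.span {y ^ k} * Ideal.span {x, y}
      ≤ Ideal.span {x, y} * Ideal.span {y ^ (k + 1)}
          + Ideal.span {x} * Ideal.span {x, y} ^ (k + 1) := by
  have ringid : ∀ (A B C : Ideal R), (A + B) * C * (A + B)
      = A * ((A + B) * C) + (A + B) * (B * C) := by intro A B C; ring
  have h1 : Ideal.span {x, y} * Ideal.span {y ^ k} * Ideal.span {x, y}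
      = Ideal.span {x} * (Ideal.span {x, y} * Ideal.span {y ^ k})
          + Ideal.span {x, y} * (Ideal.span {y} * Ideal.span {y ^ k}) := by
    rw [aux_pair x y]; exact ringid _ _ _
  rw [h1]
  apply my_add_le
  · refine le_trans ?_ my_le_add_right
    refine Ideal.mul_mono_right ?_
    calc Ideal.span {x, y} * Ideal.span {y ^ k}
        ≤ Ideal.span {x, y} * Ideal.span {x, y} ^ k :=
          Ideal.mul_mono_right (aux_ypow x y k)
      _ = Ideal.span {x, y} ^ (k + 1) := (pow_succ' _ _).symm
  · rw [aux_yy]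
    exact my_le_add_left

/-- `𝔪^(k+1) = 𝔪·(y^k) + (x)·𝔪^k` for `𝔪 = (x,y)`. -/
lemma aux_L (k : ℕ) :
    Ideal.span {x, y} ^ (k + 1)
      = Ideal.span {x, y} * Ideal.span {y ^ k} + Ideal.span {x} * Ideal.span {x, y} ^ k := by
  induction k with
  | zero =>
      simp only [zero_add, pow_one, pow_zero, mul_one, Ideal.span_singleton_one, Ideal.mul_top]
      exact le_antisymm my_le_add_left (my_add_le le_rfl (aux_xle x y))
  | succ k ih =>
      apply le_antisymm
      · conv_lhs => rw [pow_succ, ih, add_mul]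
        apply my_add_le
        · exact aux_step x y k
        · rw [mul_assoc, ← pow_succ]
          exact my_le_add_right
      · apply my_add_le
        · calc Ideal.span {x, y} * Ideal.span {y ^ (k + 1)}
              ≤ Ideal.span {x, y} * Ideal.span {x, y} ^ (k + 1) :=
                Ideal.mul_mono_right (aux_ypow x y (k + 1))
            _ = Ideal.span {x, y} ^ (k + 2) := (pow_succ' _ _).symm
        · calc Ideal.span {x} * Ideal.span {x, y} ^ (k + 1)
              ≤ Ideal.span {x, y} * Ideal.span {x, y} ^ (k + 1) :=
                Ideal.mul_mono_left (aux_xle x y)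
            _ = Ideal.span {x, y} ^ (k + 2) := (pow_succ' _ _).symm

/-- `𝔪^(s+1) ≤ (y)·𝔪^s + (x^(s+1))`. -/
lemma aux_Q (s : ℕ) :
    Ideal.span {x, y} ^ (s + 1)
      ≤ Ideal.span {y} * Ideal.span {x, y} ^ s + Ideal.span {x ^ (s + 1)} := by
  induction s with
  | zero =>
      simp only [zero_add, pow_one, pow_zero, mul_one]
      rw [aux_pair x y]
      exact my_add_le my_le_add_right my_le_add_left
  | succ s ih =>
      calc Ideal.span {x, y} ^ (s + 2) = Ideal.span {x, y} ^ (s + 1) * Ideal.span {x, y} := by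
            rw [← pow_succ]
        _ ≤ (Ideal.span {y} * Ideal.span {x, y} ^ s + Ideal.span {x ^ (s + 1)})
              * Ideal.span {x, y} := Ideal.mul_mono_left ih
        _ = Ideal.span {y} * Ideal.span {x, y} ^ (s + 1)
              + Ideal.span {x ^ (s + 1)} * Ideal.span {x, y} := by
            rw [add_mul, mul_assoc, ← pow_succ]
        _ ≤ _ := by
            apply my_add_le my_le_add_left
            conv_lhs => rw [aux_pair x y, mul_add]
            apply my_add_le
            · rw [Ideal.span_singleton_mul_span_singleton, ← pow_succ]
              exact my_le_add_right
            · refine le_trans ?_ my_le_add_left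
              rw [mul_comm]
              exact Ideal.mul_mono_right (aux_xpow x y (s + 1))

/-- `𝔪^(s+t+1) ≤ (y^(t+1))·𝔪^s + (x^(s+1))·𝔪^t`. -/
lemma aux_P (s t : ℕ) :
    Ideal.span {x, y} ^ (s + t + 1)
      ≤ Ideal.span {y ^ (t + 1)} * Ideal.span {x, y} ^ s
          + Ideal.span {x ^ (s + 1)} * Ideal.span {x, y} ^ t := by
  induction t with
  | zero =>
      simpa only [zero_add, pow_one, add_zero, pow_zero, mul_one] using aux_Q x y s
  | succ t ih =>
      have e1 : s + (t + 1) + 1 = (s + t + 1) + 1 := by omega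
      calc Ideal.span {x, y} ^ (s + (t + 1) + 1)
          = Ideal.span {x, y} ^ (s + t + 1) * Ideal.span {x, y} := by rw [e1, pow_succ]
        _ ≤ (Ideal.span {y ^ (t + 1)} * Ideal.span {x, y} ^ s
              + Ideal.span {x ^ (s + 1)} * Ideal.span {x, y} ^ t) * Ideal.span {x, y} :=
            Ideal.mul_mono_left ih
        _ = Ideal.span {y ^ (t + 1)} * Ideal.span {x, y} ^ (s + 1)
              + Ideal.span {x ^ (s + 1)} * Ideal.span {x, y} ^ (t + 1) := by
            rw [add_mul, mul_assoc, mul_assoc, ← pow_succ, ← pow_succ]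
        _ ≤ _ := by
            apply my_add_le _ my_le_add_right
            calc Ideal.span {y ^ (t + 1)} * Ideal.span {x, y} ^ (s + 1)
                ≤ Ideal.span {y ^ (t + 1)}
                    * (Ideal.span {y} * Ideal.span {x, y} ^ s + Ideal.span {x ^ (s + 1)}) :=
                  Ideal.mul_mono_right (aux_Q x y s)
              _ = Ideal.span {y} * Ideal.span {y ^ (t + 1)} * Ideal.span {x, y} ^ s
                    + Ideal.span {x ^ (s + 1)} * Ideal.span {y ^ (t + 1)} := by
                  rw [mul_add, ← mul_assoc, mul_comm (Ideal.span {y ^ (t + 1)}) (Ideal.span {y}),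
                    mul_comm (Ideal.span {y ^ (t + 1)}) (Ideal.span {x ^ (s + 1)})]
              _ ≤ _ := by
                  apply my_add_le
                  · rw [aux_yy]
                    exact my_le_add_left
                  · exact le_trans (Ideal.mul_mono_right (aux_ypow x y (t + 1))) my_le_add_right

end Aux

/-- For `2 ≤ m ≤ n`, `I = (xᵐ) + y^(n-m+1) 𝔪^(m-1)` and `J = 𝔪^(m-1)`:
`IJ = I y^(m-1) + xᵐ J` and `𝔪J = 𝔪 y^(m-1) + x J`. -/
theorem two_ideal_identities {R : Type*} [CommRing R] [IsDomain R] [IsNoetherianRing R]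
    [IsLocalRing R] (x y : R) (hm : maximalIdeal R = Ideal.span {x, y})
    (hdim : ringKrullDim R = 2)
    (m n : ℕ) (h2m : 2 ≤ m) (hmn : m ≤ n)
    (I J : Ideal R)
    (hI : I = Ideal.span {x ^ m} + Ideal.span {y ^ (n - m + 1)} * maximalIdeal R ^ (m - 1))
    (hJ : J = maximalIdeal R ^ (m - 1)) :
    I * J = I * Ideal.span {y ^ (m - 1)} + Ideal.span {x ^ m} * J ∧
      maximalIdeal R * J = maximalIdeal R * Ideal.span {y ^ (m - 1)} + Ideal.span {x} * J := by
  obtain ⟨a, rfl⟩ : ∃ a, m = a + 2 := ⟨m - 2, by omega⟩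
  obtain ⟨b, rfl⟩ : ∃ b, n = (a + 2) + b := ⟨n - (a + 2), by omega⟩
  have e1 : a + 2 - 1 = a + 1 := by omega
  have e2 : a + 2 + b - (a + 2) + 1 = b + 1 := by omega
  subst hI hJ
  rw [hm, e1, e2]
  constructor
  · -- first identity
    apply le_antisymm
    · rw [add_mul]
      apply my_add_le
      · exact my_le_add_right
      · -- (y^(b+1)) M^(a+1) * M^(a+1) ≤ RHS
        have hpow : Ideal.span {x, y} ^ (a + 1) * Ideal.span {x, y} ^ (a + 1)
            = Ideal.span {x, y} ^ ((a + 1) + a + 1) := by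
          rw [← pow_add]; ring_nf
        calc Ideal.span {y ^ (b + 1)} * Ideal.span {x, y} ^ (a + 1)
              * Ideal.span {x, y} ^ (a + 1)
            = Ideal.span {y ^ (b + 1)} * Ideal.span {x, y} ^ ((a + 1) + a + 1) := by
              rw [mul_assoc, hpow]
          _ ≤ Ideal.span {y ^ (b + 1)}
                * (Ideal.span {y ^ (a + 1)} * Ideal.span {x, y} ^ (a + 1)
                    + Ideal.span {x ^ (a + 2)} * Ideal.span {x, y} ^ a) :=
              Ideal.mul_mono_right (aux_P x y (a + 1) a)
          _ = Ideal.span {y ^ (b + 1)} * Ideal.span {x, y} ^ (a + 1)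
                  * Ideal.span {y ^ (a + 1)}
                + Ideal.span {x ^ (a + 2)}
                  * (Ideal.span {y ^ (b + 1)} * Ideal.span {x, y} ^ a) := by ring
          _ ≤ _ := by
              apply my_add_le
              · exact le_trans (Ideal.mul_mono_left my_le_add_right) my_le_add_left
              · refine le_trans (Ideal.mul_mono_right ?_) my_le_add_right
                calc Ideal.span {y ^ (b + 1)} * Ideal.span {x, y} ^ a
                    ≤ Ideal.span {x, y} * Ideal.span {x, y} ^ a := by
                      refine Ideal.mul_mono_left ?_
                      exact le_trans (aux_ypow x y (b + 1))
                        (Ideal.pow_le_self (by omega))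
                  _ = Ideal.span {x, y} ^ (a + 1) := (pow_succ' _ _).symm
    · apply my_add_le
      · exact Ideal.mul_mono_right (aux_ypow x y (a + 1))
      · exact Ideal.mul_mono_left my_le_add_left
  · -- second identity
    rw [← pow_succ']
    exact aux_L x y (a + 1)
end

section
/- Let $(R,\mathfrak{m})$ be a two-dimensional regular local ring with regular system of parameters $f, h$, let $q > 0$, $\ell \geq q$, $n = \ell - q$, and let $a = f^2 + \alpha h^{\ell}$, $b = \beta h^{\ell}$ for $\alpha, \beta \in R$ such that $a, b$ is a system of parameters. Set $c = \beta f h^n$ and $I = (a, b, c)$, $\overline{I}' = (a, b, \beta f)$. If $(\beta f)^2 \in (a,b)\overline{I}'$, then $c^2 \in (a,b)I$, so $I^2 = (a,b)I$. -/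
open Ideal IsLocalRing Submodule

/-- Key computational step: with `a = f² + α hˡ`, `b = β hˡ`, `c = β f hⁿ`
(`n = ℓ - q`), `I = (a,b,c)`, if `(βf)² ∈ (a,b)(a,b,βf)` then `c² ∈ (a,b)I`,
so `I² = (a,b)I`. -/
theorem stable_key_step {R : Type*} [CommRing R] [IsDomain R] [IsNoetherianRing R]
    [IsLocalRing R] (f h : R) (hmax : maximalIdeal R = Ideal.span {f, h})
    (hdim : ringKrullDim R = 2)
    (q ℓ n : ℕ) (hq : 0 < q) (hql : q ≤ ℓ) (hn : n = ℓ - q)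
    (α β a b c : R) (ha : a = f ^ 2 + α * h ^ ℓ) (hb : b = β * h ^ ℓ)
    (hsop : (Ideal.span {a, b}).radical = maximalIdeal R)
    (hc : c = β * f * h ^ n)
    (I : Ideal R) (hI : I = Ideal.span {a, b, c})
    (hint : (β * f) ^ 2 ∈ Ideal.span {a, b} * Ideal.span {a, b, β * f}) :
    c ^ 2 ∈ Ideal.span {a, b} * I ∧ I ^ 2 = Ideal.span {a, b} * I := by
  have haI : a ∈ I := by rw [hI]; exact Ideal.subset_span (by simp)
  have hbI : b ∈ I := by rw [hI]; exact Ideal.subset_span (by simp)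
  have hcI : c ∈ I := by rw [hI]; exact Ideal.subset_span (by simp)
  have hJI : Ideal.span {a, b} ≤ I := by
    rw [Ideal.span_le]
    rintro x hx
    simp only [Set.mem_insert_iff, Set.mem_singleton_iff] at hx
    rcases hx with rfl | rfl
    · exact haI
    · exact hbI
  -- K * span{(h^n)^2} ≤ I
  have hKcolon : Ideal.span {a, b, β * f} ≤ Submodule.colon I (Ideal.span {(h ^ n) ^ 2}) := by
    rw [Ideal.span_le]
    intro x hx
    simp only [Set.mem_insert_iff, Set.mem_singleton_iff] at hx
    rcases hx with rfl | rfl | rfl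
    · rw [SetLike.mem_coe, Ideal.mem_colon_span_singleton]; exact I.mul_mem_right _ haI
    · rw [SetLike.mem_coe, Ideal.mem_colon_span_singleton]; exact I.mul_mem_right _ hbI
    · rw [SetLike.mem_coe, Ideal.mem_colon_span_singleton]
      have : β * f * (h ^ n) ^ 2 = h ^ n * c := by rw [hc]; ring
      rw [this]
      exact I.mul_mem_left _ hcI
  have hKt : Ideal.span {a, b, β * f} * Ideal.span {(h ^ n) ^ 2} ≤ I := by
    rw [Ideal.mul_le]
    intro r hr s hs
    exact Submodule.mem_colon.1 (hKcolon hr) s hs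
  have hc2 : c ^ 2 = (β * f) ^ 2 * (h ^ n) ^ 2 := by rw [hc]; ring
  have hc2JI : c ^ 2 ∈ Ideal.span {a, b} * I := by
    have hmem : (β * f) ^ 2 * (h ^ n) ^ 2 ∈
        (Ideal.span {a, b} * Ideal.span {a, b, β * f}) * Ideal.span {(h ^ n) ^ 2} :=
      Ideal.mul_mem_mul hint (Ideal.subset_span rfl)
    rw [mul_assoc] at hmem
    rw [hc2]
    exact Ideal.mul_mono_right hKt hmem
  refine ⟨hc2JI, le_antisymm ?_ ?_⟩
  · have hIdec : I = Ideal.span {a, b} ⊔ Ideal.span {c} := by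
      rw [hI, Ideal.span_insert a, Ideal.span_insert b, Ideal.span_insert a {b}, sup_assoc]
    have hCI : Ideal.span {c} ≤ I := by
      rw [Ideal.span_le, Set.singleton_subset_iff]; exact hcI
    rw [pow_two]
    conv_lhs => rw [hIdec]
    rw [Ideal.sup_mul, Ideal.mul_sup, Ideal.mul_sup]
    refine sup_le (sup_le ?_ ?_) (sup_le ?_ ?_)
    · exact Ideal.mul_mono_right hJI
    · exact Ideal.mul_mono_right hCI
    · rw [mul_comm (Ideal.span {c})]; exact Ideal.mul_mono_right hCI
    · rw [Ideal.span_singleton_mul_span_singleton, ← pow_two]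
      rw [Ideal.span_le, Set.singleton_subset_iff]
      exact hc2JI
  · rw [pow_two]; exact Ideal.mul_mono_left hJI
end

section
/- Let $(R,\mathfrak{m})$ be a two-dimensional regular local ring with regular system of parameters $x, y$, and let $0 < \alpha < \beta < n$ be integers. Set $I = (x^3, x^2y^{\alpha}, xy^{\beta}, y^n)$ and $Q = (x^3, y^n)$. Then $I^2 = QI$ if and only if $\beta \leq 2\alpha$, $n \leq \alpha + \beta$, and $n + \alpha \leq 2\beta$. -/
/-!
Because `(x)` is a height-one prime (Krull's principal ideal theorem and Nakayama) not containing
`y`, the pair `x, y` behaves like a regular sequence: a monomial `xᵃ yᵇ` lies in an ideal generated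
by monomials iff one of them divides it. Both `I²` and `QI` are monomial ideals and `QI ⊆ I²`, so
`I² = QI` says that each product of two generators of `I` is divisible by a generator of `QI`.
Only `x⁴y²ᵅ`, `x³yᵅ⁺ᵝ` and `x²y²ᵝ` are in question, and they give the three inequalities.
-/

open Ideal IsLocalRing Submodule
open scoped Pointwise

section KrullDimTwo

variable {R : Type*} [CommRing R] [IsLocalRing R]

lemma ne_maximalIdeal_of_height_le_one (hdim : 1 < ringKrullDim R) {p : Ideal R}
    (hp : p.height ≤ 1) : p ≠ maximalIdeal R := by
  rintro rfl
  rw [← maximalIdeal_height_eq_ringKrullDim] at hdim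
  exact hdim.not_ge (by exact_mod_cast hp)

variable [IsNoetherianRing R]

lemma maximalIdeal_ne_span_singleton (hdim : 1 < ringKrullDim R) (z : R) :
    maximalIdeal R ≠ span {z} := by
  intro h
  have hz : ¬IsUnit z := fun hz ↦ (maximalIdeal.isMaximal R).ne_top (by simp [h, hz])
  exact ne_maximalIdeal_of_height_le_one hdim (height_span_singleton_le_one hz) h.symm

/-- Modulo `x` every element of `p` is a multiple of `y ∉ p`, so `p ⊆ (x) + 𝔪 p` and Nakayama
applies. -/
lemma eq_span_singleton_of_mem_of_lt_maximalIdeal {x y : R}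
    (hm : maximalIdeal R = span {x, y}) {p : Ideal R} [p.IsPrime] (hxp : x ∈ p)
    (hlt : p < maximalIdeal R) : p = span {x} := by
  have hyp : y ∉ p := fun hyp ↦
    hlt.not_ge (hm ▸ Ideal.span_le.2 (by simp [Set.insert_subset_iff, *]))
  refine le_antisymm ?_ (Ideal.span_singleton_le_iff_mem p |>.2 hxp)
  refine Submodule.le_of_le_smul_of_le_jacobson_bot (IsNoetherian.noetherian p)
    (maximalIdeal_le_jacobson _) fun v hv ↦ ?_
  obtain ⟨a, b, rfl⟩ := Ideal.mem_span_pair.1 (hm ▸ hlt.le hv)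
  have hb : b ∈ p := by
    refine (Ideal.IsPrime.mem_or_mem ‹_› ?_).resolve_right hyp
    simpa using p.sub_mem hv (p.mul_mem_left a hxp)
  refine add_mem_sup (mul_mem_left _ a (Ideal.mem_span_singleton_self x)) ?_
  rw [smul_eq_mul, mul_comm b]
  exact Ideal.mul_mem_mul (hm ▸ Ideal.subset_span (by simp)) hb

lemma span_singleton_isPrime_of_maximalIdeal_eq_span_pair (hdim : 1 < ringKrullDim R) {x y : R}
    (hm : maximalIdeal R = span {x, y}) : (span {x}).IsPrime := by
  have hx : span {x} ≠ ⊤ := by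
    rw [ne_eq, span_singleton_eq_top, ← mem_nonunits_iff, ← mem_maximalIdeal, hm]
    exact Ideal.subset_span (by simp)
  obtain ⟨p, hp⟩ := (span {x}).nonempty_minimalPrimes hx
  have : p.IsPrime := hp.isPrime
  have hlt : p < maximalIdeal R := lt_of_le_of_ne (le_maximalIdeal this.ne_top)
    (ne_maximalIdeal_of_height_le_one hdim
      (height_le_one_of_isPrincipal_of_mem_minimalPrimes _ p hp))
  have hxp : x ∈ p := hp.1.2 (Ideal.mem_span_singleton_self x)
  rwa [← eq_span_singleton_of_mem_of_lt_maximalIdeal hm hxp hlt]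

end KrullDimTwo

section MonomialIdeal

variable {R : Type*} [CommRing R] {x y : R}

def monomialIdeal (x y : R) (S : Set (ℕ × ℕ)) : Ideal R :=
  span ((fun e : ℕ × ℕ ↦ x ^ e.1 * y ^ e.2) '' S)

lemma monomialIdeal_mul (S T : Set (ℕ × ℕ)) :
    monomialIdeal x y S * monomialIdeal x y T = monomialIdeal x y (S + T) := by
  rw [monomialIdeal, monomialIdeal, monomialIdeal, Ideal.span_mul_span', ← Set.image2_mul,
    ← Set.image2_add, Set.image_image2, Set.image2_image_left, Set.image2_image_right]
  congr 1
  ext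
  simp only [Set.mem_image2, Prod.fst_add, Prod.snd_add, pow_add]
  grind

lemma pow_mul_pow_mem_monomialIdeal {S : Set (ℕ × ℕ)} {e f : ℕ × ℕ} (he : e ∈ S) (hef : e ≤ f) :
    x ^ f.1 * y ^ f.2 ∈ monomialIdeal x y S :=
  Ideal.mem_of_dvd _ (mul_dvd_mul (pow_dvd_pow x hef.1) (pow_dvd_pow y hef.2))
    (Ideal.subset_span ⟨e, he, rfl⟩)

lemma exists_eq_add_mul_of_pow_mul_pow_mem_monomialIdeal {S : Set (ℕ × ℕ)} {a b : ℕ}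
    (hS : ∀ e ∈ S, ¬e ≤ (a, b)) (h : x ^ a * y ^ b ∈ monomialIdeal x y S) :
    ∃ d, ∃ w ∈ monomialIdeal x y ((· + (1, 0)) ⁻¹' S),
      x ^ a * y ^ b = d * y ^ (b + 1) + x * w := by
  have hle : monomialIdeal x y S ≤
      span {y ^ (b + 1)} ⊔ span {x} * monomialIdeal x y ((· + (1, 0)) ⁻¹' S) := by
    rw [monomialIdeal, Ideal.span_le]
    rintro _ ⟨⟨i, j⟩, he, rfl⟩
    rcases i with _ | i
    · have hj : b + 1 ≤ j := by simpa [Prod.mk_le_mk] using hS _ he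
      exact Ideal.mem_sup_left (Ideal.mem_span_singleton.2 (by simpa using pow_dvd_pow y hj))
    · refine Ideal.mem_sup_right (Ideal.mem_span_singleton_mul.2
        ⟨_, ?_, (pow_succ' x i ▸ mul_assoc ..).symm⟩)
      exact pow_mul_pow_mem_monomialIdeal (e := (i, j)) (by simpa using he) le_rfl
  obtain ⟨_, hd, _, hxw, hsum⟩ := mem_sup.1 (hle h)
  obtain ⟨d, rfl⟩ := Ideal.mem_span_singleton'.1 hd
  obtain ⟨w, hw, rfl⟩ := Ideal.mem_span_singleton_mul.1 hxw
  exact ⟨d, w, hw, hsum.symm⟩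

variable [IsDomain R] [IsLocalRing R]

/-- Induction on the `x`-degree: in `x ^ (a + 1) * y ^ b = d * y ^ (b + 1) + x * w`, the prime `(x)`
contains `d` because it misses `y`, and cancelling `x` lowers the degree. -/
lemma exists_le_of_pow_mul_pow_mem_monomialIdeal (hx : x ≠ 0) (hxp : (span {x}).IsPrime)
    (hy : y ∉ span {x}) (hym : y ∈ maximalIdeal R) {S : Set (ℕ × ℕ)} {a b : ℕ}
    (h : x ^ a * y ^ b ∈ monomialIdeal x y S) : ∃ e ∈ S, e ≤ (a, b) := by
  have hyx : ∀ k, y ^ k ∉ span {x} := fun k hk ↦ hy (hxp.mem_of_pow_mem k hk)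
  induction a generalizing S with
  | zero =>
    by_contra! hS
    obtain ⟨d, w, -, hsum⟩ := exists_eq_add_mul_of_pow_mul_pow_mem_monomialIdeal hS h
    have hmem : (1 - d * y) * y ^ b ∈ span {x} :=
      Ideal.mem_span_singleton'.2 ⟨w, by linear_combination -hsum⟩
    refine (hxp.mem_or_mem hmem).elim (fun hunit ↦ ?_) (hyx b)
    have h1 : 1 - d * y ∈ maximalIdeal R := le_maximalIdeal hxp.ne_top hunit
    exact (maximalIdeal.isMaximal R).ne_top <|
      (Ideal.eq_top_iff_one _).2 (by simpa using add_mem h1 (mul_mem_left _ d hym))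
  | succ a ih =>
    by_contra! hS
    obtain ⟨d, w, hw, hsum⟩ := exists_eq_add_mul_of_pow_mul_pow_mem_monomialIdeal hS h
    have hd : d * y ^ (b + 1) ∈ span {x} :=
      Ideal.mem_span_singleton'.2 ⟨x ^ a * y ^ b - w, by linear_combination hsum⟩
    obtain ⟨d, rfl⟩ := Ideal.mem_span_singleton'.1 ((hxp.mem_or_mem hd).resolve_right (hyx _))
    have hcancel : x ^ a * y ^ b = d * y ^ (b + 1) + w :=
      mul_left_cancel₀ hx (by linear_combination hsum)
    have hmem : x ^ a * y ^ b ∈ monomialIdeal x y (insert (0, b + 1) ((· + (1, 0)) ⁻¹' S)) := by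
      rw [hcancel]
      refine add_mem (mul_mem_left _ d ?_)
        (Ideal.span_mono (Set.image_mono (Set.subset_insert ..)) hw)
      simpa using
        pow_mul_pow_mem_monomialIdeal (x := x) (y := y) (Set.mem_insert (0, b + 1) _) le_rfl
    obtain ⟨e, he, hle⟩ := ih hmem
    rcases he with rfl | he
    · simp [Prod.mk_le_mk] at hle
    · exact hS _ he (add_le_add_left hle (1, 0))

lemma monomialIdeal_le_monomialIdeal_iff (hx : x ≠ 0) (hxp : (span {x}).IsPrime)
    (hy : y ∉ span {x}) (hym : y ∈ maximalIdeal R) {S T : Set (ℕ × ℕ)} :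
    monomialIdeal x y S ≤ monomialIdeal x y T ↔ ∀ e ∈ S, ∃ f ∈ T, f ≤ e := by
  refine ⟨fun h e he ↦ ?_, fun h ↦ Ideal.span_le.2 ?_⟩
  · exact exists_le_of_pow_mul_pow_mem_monomialIdeal hx hxp hy hym
      (h (Ideal.subset_span ⟨e, he, rfl⟩))
  · rintro _ ⟨e, he, rfl⟩
    obtain ⟨f, hf, hfe⟩ := h e he
    exact pow_mul_pow_mem_monomialIdeal hf hfe

end MonomialIdeal

lemma forall_mem_add_exists_le_iff {α β n : ℕ} (hβn : β < n) :
    (∀ e ∈ ({(3, 0), (2, α), (1, β), (0, n)} : Set (ℕ × ℕ)) + {(3, 0), (2, α), (1, β), (0, n)},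
      ∃ f ∈ ({(3, 0), (0, n)} : Set (ℕ × ℕ)) + {(3, 0), (2, α), (1, β), (0, n)}, f ≤ e) ↔
    β ≤ 2 * α ∧ n ≤ α + β ∧ n + α ≤ 2 * β := by
  refine ⟨fun h ↦ ?_, fun h ↦ ?_⟩
  · have h₁ := h ((2, α) + (2, α)) (Set.add_mem_add (by simp) (by simp))
    have h₂ := h ((2, α) + (1, β)) (Set.add_mem_add (by simp) (by simp))
    have h₃ := h ((1, β) + (1, β)) (Set.add_mem_add (by simp) (by simp))
    simp only [← Set.image2_add, Set.exists_mem_image2, Set.exists_mem_insert,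
      Set.mem_singleton_iff, exists_eq_left, Prod.mk_add_mk, Prod.mk_le_mk] at h₁ h₂ h₃
    omega
  · simp only [← Set.image2_add, Set.forall_mem_image2, Set.exists_mem_image2,
      Set.forall_mem_insert, Set.exists_mem_insert, Set.mem_singleton_iff, forall_eq,
      exists_eq_left, Prod.mk_add_mk, Prod.mk_le_mk]
    omega

theorem stable_iff_inequalities_general {R : Type*} [CommRing R] [IsDomain R] [IsNoetherianRing R]
    [IsLocalRing R] (x y : R) (hm : maximalIdeal R = Ideal.span {x, y})
    (hdim : ringKrullDim R = 2)
    (α β n : ℕ) (hβn : β < n)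
    (I Q : Ideal R)
    (hI : I = Ideal.span {x ^ 3, x ^ 2 * y ^ α, x * y ^ β, y ^ n})
    (hQ : Q = Ideal.span {x ^ 3, y ^ n}) :
    I ^ 2 = Q * I ↔ (β ≤ 2 * α ∧ n ≤ α + β ∧ n + α ≤ 2 * β) := by
  have hdim : 1 < ringKrullDim R := by rw [hdim]; decide
  have hxp := span_singleton_isPrime_of_maximalIdeal_eq_span_pair hdim hm
  have hx : x ≠ 0 := by
    rintro rfl
    exact maximalIdeal_ne_span_singleton hdim y (by simpa using hm)
  have hy : y ∉ span {x} := fun hy ↦ maximalIdeal_ne_span_singleton hdim x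
    (by rw [hm, Set.pair_comm]; exact Submodule.span_insert_eq_span hy)
  have hym : y ∈ maximalIdeal R := hm ▸ Ideal.subset_span (by simp)
  have hI : I = monomialIdeal x y {(3, 0), (2, α), (1, β), (0, n)} := by
    simp [hI, monomialIdeal, Set.image_insert_eq]
  have hQ : Q = monomialIdeal x y {(3, 0), (0, n)} := by
    simp [hQ, monomialIdeal, Set.image_insert_eq]
  have hQI : Q * I ≤ I * I := Ideal.mul_mono_left <| hQ ▸ hI ▸
    Ideal.span_mono (Set.image_mono (by simp [Set.insert_subset_iff]))
  rw [sq, ← hQI.ge_iff_eq', hI, hQ, monomialIdeal_mul, monomialIdeal_mul,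
    monomialIdeal_le_monomialIdeal_iff hx hxp hy hym]
  exact forall_mem_add_exists_le_iff hβn

/-- For `0 < α < β < n`, `I = (x³, x²yᵅ, xyᵝ, yⁿ)` and `Q = (x³, yⁿ)`:
`I² = QI` iff `β ≤ 2α`, `n ≤ α + β`, and `n + α ≤ 2β`. -/
theorem stable_iff_inequalities {R : Type*} [CommRing R] [IsDomain R] [IsNoetherianRing R]
    [IsLocalRing R] (x y : R) (hm : maximalIdeal R = Ideal.span {x, y})
    (hdim : ringKrullDim R = 2)
    (α β n : ℕ) (hα : 0 < α) (hαβ : α < β) (hβn : β < n)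
    (I Q : Ideal R)
    (hI : I = Ideal.span {x ^ 3, x ^ 2 * y ^ α, x * y ^ β, y ^ n})
    (hQ : Q = Ideal.span {x ^ 3, y ^ n}) :
    I ^ 2 = Q * I ↔ (β ≤ 2 * α ∧ n ≤ α + β ∧ n + α ≤ 2 * β) :=
  stable_iff_inequalities_general x y hm hdim α β n hβn I Q hI hQ
end

section
/- Let $(R,\mathfrak{m})$ be a two-dimensional regular local ring with regular system of parameters $x, y$, and integers $0 < \alpha < \beta < n$ with $n + \alpha = 2\beta$, $n \leq \alpha + \beta$, $\beta \leq 2\alpha$. Set $I = (x^3, x^2y^{\alpha}, xy^{\beta}, y^n)$ and $J = (x^2, xy^{n-\beta}, y^{n-\alpha})$. Then $IJ = I(x^2 - y^{n-\alpha}) + x^3 J$ and $\mathfrak{m}J = \mathfrak{m}(x^2 - y^{n-\alpha}) + yJ$. -/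
open Ideal IsLocalRing Submodule

/-!
Write `d = n - β = β - α`, so that `α = d + a`, `β = 2d + a`, `n = 3d + a` with `a = α - d ≥ 0`,
and put `c = x² - y^(2d) ∈ J`. Both identities have the shape `AJ = Ac + bJ` with `b ∈ A`, so only
`AJ ⊆ Ac + bJ` needs proof, and it suffices to write each product of generators as `i c + b j`
with `i ∈ A`, `j ∈ J`; all these are polynomial identities in `x` and `y`.
-/

namespace Ideal

variable {R : Type*} [CommRing R]

theorem span_mul_span_eq_mul_span_singleton_sup {S T : Set R} {b c : R} (hb : b ∈ span S)
    (hc : c ∈ span T)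
    (h : ∀ s ∈ S, ∀ t ∈ T, ∃ i ∈ span S, ∃ j ∈ span T, s * t = i * c + b * j) :
    span S * span T = span S * span {c} + span {b} * span T := by
  refine le_antisymm ?_ <| sup_le (mul_mono_right ((span_singleton_le_iff_mem _).2 hc))
    (mul_mono_left ((span_singleton_le_iff_mem _).2 hb))
  rw [span_mul_span', span_le]
  rintro _ ⟨s, hs, t, ht, rfl⟩
  obtain ⟨i, hi, j, hj, hst⟩ := h s hs t ht
  change s * t ∈ _
  rw [hst]
  exact add_mem (mem_sup_left (mul_mem_mul hi (mem_span_singleton_self c)))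
    (mem_sup_right (mul_mem_mul (mem_span_singleton_self b) hj))

end Ideal

namespace AlmostGorenstein

variable {R : Type*} [CommRing R] (x y : R)

def I (d a : ℕ) : Ideal R := span {x ^ 3, x ^ 2 * y ^ (d + a), x * y ^ (2 * d + a), y ^ (3 * d + a)}

def J (d : ℕ) : Ideal R := span {x ^ 2, x * y ^ d, y ^ (2 * d)}

theorem I_mul_J (d a : ℕ) :
    I x y d a * J x y d = I x y d a * span {x ^ 2 - y ^ (2 * d)} + span {x ^ 3} * J x y d := by
  have hI₁ : x ^ 3 ∈ I x y d a := Ideal.subset_span (by simp)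
  have hI₂ : x ^ 2 * y ^ (d + a) ∈ I x y d a := Ideal.subset_span (by simp)
  have hI₃ : x * y ^ (2 * d + a) ∈ I x y d a := Ideal.subset_span (by simp)
  have hI₄ : y ^ (3 * d + a) ∈ I x y d a := Ideal.subset_span (by simp)
  have hJ₁ : x ^ 2 ∈ J x y d := Ideal.subset_span (by simp)
  have hJ₂ : x * y ^ d ∈ J x y d := Ideal.subset_span (by simp)
  have hJ₃ : y ^ (2 * d) ∈ J x y d := Ideal.subset_span (by simp)
  have hJ₂' : y ^ a * (x * y ^ d) ∈ J x y d := mul_mem_left _ _ hJ₂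
  have hJ₃' : y ^ a * y ^ (2 * d) ∈ J x y d := mul_mem_left _ _ hJ₃
  refine span_mul_span_eq_mul_span_singleton_sup hI₁ (sub_mem hJ₁ hJ₃) ?_
  simp only [Set.mem_insert_iff, Set.mem_singleton_iff, forall_eq_or_imp, forall_eq]
  refine ⟨⟨?_, ?_, ?_⟩, ⟨?_, ?_, ?_⟩, ⟨?_, ?_, ?_⟩, ⟨?_, ?_, ?_⟩⟩
  · exact ⟨0, zero_mem _, x ^ 2, hJ₁, by ring⟩
  · exact ⟨0, zero_mem _, x * y ^ d, hJ₂, by ring⟩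
  · exact ⟨0, zero_mem _, y ^ (2 * d), hJ₃, by ring⟩
  · exact ⟨0, zero_mem _, _, hJ₂', by ring⟩
  · exact ⟨0, zero_mem _, _, hJ₃', by ring⟩
  · exact ⟨_, neg_mem hI₂, _, hJ₂', by ring⟩
  · exact ⟨0, zero_mem _, _, hJ₃', by ring⟩
  · exact ⟨_, neg_mem hI₂, _, hJ₂', by ring⟩
  · exact ⟨_, neg_mem hI₃, _, hJ₃', by ring⟩
  · exact ⟨_, neg_mem hI₂, _, hJ₂', by ring⟩
  · exact ⟨_, neg_mem hI₃, _, hJ₃', by ring⟩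
  · exact ⟨_, sub_mem (neg_mem hI₂) hI₄, _, hJ₂', by ring⟩

theorem span_pair_mul_J {d : ℕ} (hd : d ≠ 0) :
    span {x, y} * J x y d = span {x, y} * span {x ^ 2 - y ^ (2 * d)} + span {y} * J x y d := by
  obtain ⟨e, rfl⟩ : ∃ e, d = e + 1 := ⟨d - 1, by omega⟩
  have hx : x ∈ span {x, y} := Ideal.subset_span (by simp)
  have hy : y ∈ span {x, y} := Ideal.subset_span (by simp)
  have hJ₁ : x ^ 2 ∈ J x y (e + 1) := Ideal.subset_span (by simp)
  have hJ₂ : x * y ^ (e + 1) ∈ J x y (e + 1) := Ideal.subset_span (by simp)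
  have hJ₃ : y ^ (2 * (e + 1)) ∈ J x y (e + 1) := Ideal.subset_span (by simp)
  refine span_mul_span_eq_mul_span_singleton_sup hy (sub_mem hJ₁ hJ₃) ?_
  simp only [Set.mem_insert_iff, Set.mem_singleton_iff, forall_eq_or_imp, forall_eq]
  refine ⟨⟨?_, ?_, ?_⟩, ⟨?_, ?_, ?_⟩⟩
  · exact ⟨x, hx, _, mul_mem_left _ (y ^ e) hJ₂, by ring⟩
  · exact ⟨_, mul_mem_left _ (y ^ e) hy, _, mul_mem_left _ (y ^ e) hJ₃, by ring⟩
  · exact ⟨0, zero_mem _, _, mul_mem_left _ (y ^ e) hJ₂, by ring⟩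
  · exact ⟨0, zero_mem _, x ^ 2, hJ₁, by ring⟩
  · exact ⟨0, zero_mem _, _, hJ₂, by ring⟩
  · exact ⟨0, zero_mem _, _, hJ₃, by ring⟩

end AlmostGorenstein

theorem almost_gorenstein_identities_general {R : Type*} [CommRing R]
    [IsLocalRing R] (x y : R) (hm : maximalIdeal R = Ideal.span {x, y})
    (α β n : ℕ) (hβn : β < n)
    (h1 : n + α = 2 * β) (h2 : n ≤ α + β)
    (I J : Ideal R)
    (hI : I = Ideal.span {x ^ 3, x ^ 2 * y ^ α, x * y ^ β, y ^ n})
    (hJ : J = Ideal.span {x ^ 2, x * y ^ (n - β), y ^ (n - α)}) :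
    I * J = I * Ideal.span {x ^ 2 - y ^ (n - α)} + Ideal.span {x ^ 3} * J ∧
      maximalIdeal R * J =
        maximalIdeal R * Ideal.span {x ^ 2 - y ^ (n - α)} + Ideal.span {y} * J := by
  obtain ⟨d, a, rfl, rfl, rfl, hd⟩ :
      ∃ d a, α = d + a ∧ β = 2 * d + a ∧ n = 3 * d + a ∧ d ≠ 0 :=
    ⟨n - β, α - (n - β), by omega, by omega, by omega, by omega⟩
  subst hI hJ
  rw [hm, show 3 * d + a - (2 * d + a) = d by omega, show 3 * d + a - (d + a) = 2 * d by omega]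
  exact ⟨AlmostGorenstein.I_mul_J x y d a, AlmostGorenstein.span_pair_mul_J x y hd⟩

/-- For `0 < α < β < n` with `n + α = 2β`, `n ≤ α + β`, `β ≤ 2α`,
`I = (x³, x²yᵅ, xyᵝ, yⁿ)` and `J = (x², xy^(n-β), y^(n-α))`:
`IJ = I(x² - y^(n-α)) + x³J` and `𝔪J = 𝔪(x² - y^(n-α)) + yJ`. -/
theorem almost_gorenstein_identities {R : Type*} [CommRing R] [IsDomain R] [IsNoetherianRing R]
    [IsLocalRing R] (x y : R) (hm : maximalIdeal R = Ideal.span {x, y})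
    (hdim : ringKrullDim R = 2)
    (α β n : ℕ) (hα : 0 < α) (hαβ : α < β) (hβn : β < n)
    (h1 : n + α = 2 * β) (h2 : n ≤ α + β) (h3 : β ≤ 2 * α)
    (I J : Ideal R)
    (hI : I = Ideal.span {x ^ 3, x ^ 2 * y ^ α, x * y ^ β, y ^ n})
    (hJ : J = Ideal.span {x ^ 2, x * y ^ (n - β), y ^ (n - α)}) :
    I * J = I * Ideal.span {x ^ 2 - y ^ (n - α)} + Ideal.span {x ^ 3} * J ∧
      maximalIdeal R * J =
        maximalIdeal R * Ideal.span {x ^ 2 - y ^ (n - α)} + Ideal.span {y} * J :=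
  almost_gorenstein_identities_general x y hm α β n hβn h1 h2 I J hI hJ
end

section
/- Let $(R,\mathfrak{m})$ be a two-dimensional regular local ring with regular system of parameters $x, y$, let $\alpha > 0$ and $n = 2\alpha$. Set $I = (x^3, x^2y^{\alpha}, y^n)$ and $J = (x, y^{n-\alpha})$. Then $\mathfrak{m}J = \mathfrak{m}x + yJ$ and $IJ = Ix + y^n J$. -/
open Ideal IsLocalRing Submodule

/-- For `α > 0`, `n = 2α`, `I = (x³, x²yᵅ, yⁿ)` and `J = (x, y^(n-α))`:
`𝔪J = 𝔪x + yJ` and `IJ = Ix + yⁿJ`. -/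
theorem almost_gorenstein_criterion_identities {R : Type*} [CommRing R] [IsDomain R]
    [IsNoetherianRing R] [IsLocalRing R] (x y : R)
    (hm : maximalIdeal R = Ideal.span {x, y}) (hdim : ringKrullDim R = 2)
    (α n : ℕ) (hα : 0 < α) (hn : n = 2 * α)
    (I J : Ideal R)
    (hI : I = Ideal.span {x ^ 3, x ^ 2 * y ^ α, y ^ n})
    (hJ : J = Ideal.span {x, y ^ (n - α)}) :
    maximalIdeal R * J = maximalIdeal R * Ideal.span {x} + Ideal.span {y} * J ∧
      I * J = I * Ideal.span {x} + Ideal.span {y ^ n} * J := by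
  obtain ⟨a, rfl⟩ : ∃ a, α = a + 1 := ⟨α - 1, by omega⟩
  have hna : n - (a + 1) = a + 1 := by omega
  subst hI hJ hn
  rw [hm, hna]
  constructor
  · -- first identity
    have h1 : (span {x, y} : Ideal R) * span {x, y ^ (a+1)} =
        span {x * x, x * y ^ (a+1), y * x, y * y ^ (a+1)} := span_pair_mul_span_pair ..
    have h2 : (span {x, y} : Ideal R) * span {x} =
        span {x * x, y * x} := by
      have := span_pair_mul_span_pair x y x x (R := R)
      simpa [Set.pair_eq_singleton, Set.insert_comm, Set.insert_idem] using this
    have h3 : (span {y} : Ideal R) * span {x, y ^ (a+1)} =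
        span {y * x, y * y ^ (a+1)} := by
      have := span_pair_mul_span_pair y y x (y ^ (a+1)) (R := R)
      simpa [Set.pair_eq_singleton] using this
    rw [h1, h2, h3, Submodule.add_eq_sup, ← Ideal.span_union]
    apply le_antisymm <;> rw [Ideal.span_le] <;> rintro z hz
    · simp only [Set.mem_insert_iff, Set.mem_singleton_iff] at hz
      rcases hz with rfl | rfl | rfl | rfl
      · exact Ideal.subset_span (by simp)
      · have : x * y ^ (a+1) = y ^ a * (y * x) := by ring
        rw [this]
        exact Ideal.mul_mem_left _ _ (Ideal.subset_span (by simp))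
      · exact Ideal.subset_span (by simp)
      · exact Ideal.subset_span (by simp)
    · simp only [Set.union_def, Set.mem_setOf_eq, Set.mem_insert_iff, Set.mem_singleton_iff] at hz
      rcases hz with (rfl | rfl) | (rfl | rfl) <;> exact Ideal.subset_span (by simp)
  · apply le_antisymm
    · rw [Ideal.span_mul_span', Ideal.span_le]
      rintro z hz
      rw [Set.mem_mul] at hz
      obtain ⟨s, hs, t, ht, rfl⟩ := hz
      simp only [Set.mem_insert_iff, Set.mem_singleton_iff] at hs ht
      rcases hs with rfl | rfl | rfl <;> rcases ht with rfl | rfl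
      · exact Submodule.mem_sup_left
          (Ideal.mul_mem_mul (Ideal.subset_span (by simp)) (Ideal.subset_span (by simp)))
      · have : x ^ 3 * y ^ (a+1) = (x ^ 2 * y ^ (a+1)) * x := by ring
        rw [this]
        exact Submodule.mem_sup_left
          (Ideal.mul_mem_mul (Ideal.subset_span (by simp)) (Ideal.subset_span (by simp)))
      · exact Submodule.mem_sup_left
          (Ideal.mul_mem_mul (Ideal.subset_span (by simp)) (Ideal.subset_span (by simp)))
      · have : x ^ 2 * y ^ (a+1) * y ^ (a+1) = x * (y ^ (2*(a+1)) * x) := by ring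
        rw [this]
        exact Submodule.mem_sup_right (Ideal.mul_mem_left _ x
          (Ideal.mul_mem_mul (Ideal.subset_span (by simp)) (Ideal.subset_span (by simp))))
      · exact Submodule.mem_sup_right
          (Ideal.mul_mem_mul (Ideal.subset_span (by simp)) (Ideal.subset_span (by simp)))
      · exact Submodule.mem_sup_right
          (Ideal.mul_mem_mul (Ideal.subset_span (by simp)) (Ideal.subset_span (by simp)))
    · apply sup_le
      · exact Ideal.mul_mono_right (Ideal.span_mono (by simp))
      · exact Ideal.mul_mono_left (Ideal.span_mono (by simp))
end
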